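/- arXiv:2504.00765 — 7 statements merged into one kernel-verified Lean document; each statement's English description precedes it below -/
import Mathlib

section
/- Let ρ, ρ̃ ∈ (0,1). On a probability space let η⁰, η, η̃⁰, η̃ : ℤ → {0,1} be random fields and let (N_k)_{k∈ℤ}, (Ñ_k)_{k∈ℤ} be square-integrable integer-valued random variables such that: (i) E[η(i)] = E[η⁰(i)] = ρ and E[η̃(i)] = E[η̃⁰(i)] = ρ̃ for all i ∈ ℤ; (ii) for every k ∈ ℤ the joint law of the shifted collection (η(·+k), η⁰(·+k), η̃(·+k), η̃⁰(·+k), (N_{j+k})_{j∈ℤ}, (Ñ_{j+k})_{j∈ℤ}) equals the joint law of the unshifted collection; (iii) almost surely N_k − N_{k−1} = η⁰(k) − η(k) and Ñ_k − Ñ_{k−1} = η̃⁰(k) − η̃(k) for all k ∈ ℤ. Define h(j) = 2N_0 + ∑_{i=1}^{j}(1−2η(i)) for j ≥ 1, h(0) = 2N_0, h(j) = 2N_0 − ∑_{i=j+1}^{0}(1−2η(i)) for j ≤ −1, and define h̃ analogously from Ñ_0 and η̃. Then for all integers x, x̃, i: (E[η(x+i)·η̃⁰(0)] − ρρ̃)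 + (E[η̃(x̃+i)·η⁰(0)] − ρρ̃) = (1/4)·(Δ_i Cov(h(x+i), h̃(x̃+i))), where Δ_i f(i) = f(i+1) − 2f(i) + f(i−1) is the discrete Laplacian in i. -/
open MeasureTheory

/-- The TASEP height function built from the current N₀ at the origin and the
occupation variables η: h(j) = 2N₀ + ∑_{i=1}^{j}(1−2η(i)) for j ≥ 1, h(0) = 2N₀,
h(j) = 2N₀ − ∑_{i=j+1}^{0}(1−2η(i)) for j ≤ −1. -/
noncomputable def heightFn {Ω : Type*} (N0 : Ω → ℝ) (η : ℤ → Ω → ℝ) (j : ℤ) (ω : Ω) : ℝ :=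
  if 1 ≤ j then 2 * N0 ω + ∑ i ∈ Finset.Icc 1 j, (1 - 2 * η i ω)
  else if j = 0 then 2 * N0 ω
  else 2 * N0 ω - ∑ i ∈ Finset.Icc (j + 1) 0, (1 - 2 * η i ω)

/-- The covariance Cov(X,Y) = E[XY] − E[X]E[Y]. -/
noncomputable def covFn {Ω : Type*} [MeasureSpace Ω] (X Y : Ω → ℝ) : ℝ :=
  (∫ ω, X ω * Y ω) - (∫ ω, X ω) * (∫ ω, Y ω)

/-- The tuple of all data shifted by k, used to express translation invariance of
the joint law. -/
def shiftTuple {Ω : Type*} (η η0 ηt ηt0 N Nt : ℤ → Ω → ℝ) (k : ℤ) (ω : Ω) :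
    (ℤ → ℝ) × (ℤ → ℝ) × (ℤ → ℝ) × (ℤ → ℝ) × (ℤ → ℝ) × (ℤ → ℝ) :=
  (fun i => η (i + k) ω, fun i => η0 (i + k) ω, fun i => ηt (i + k) ω,
   fun i => ηt0 (i + k) ω, fun j => N (j + k) ω, fun j => Nt (j + k) ω)

/-!
Around a site the height functions are `h(a ± 1) = h(a) ± (1 - 2η(·))`, so bilinearity of the
covariance turns the second difference of `Cov(h(a), h̃(b))` into covariances of `h(a)` with
`η̃(b)`, `η̃(b+1)`, of `h̃(b)` with `η(a)`, `η(a+1)`, and of `η` with `η̃`. Shifting all data by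
one site preserves their joint law, and by the conservation law at the bond `(0, 1)` the height
function of the shifted data is `h(· + 1) + 2η⁰(1) - 1`; comparing both expressions for
`E[h(a - 1) η̃(b)]` gives `E[h(a) η̃(b)] - E[h(a) η̃(b+1)] = 2 E[η̃(b) η⁰(0)] - 2 E[η(a) η̃(b)]`,
and symmetrically with the two species exchanged.
-/

open ProbabilityTheory

section HeightFunction

variable {Ω : Type*} (N0 : Ω → ℝ) (e : ℤ → Ω → ℝ)

theorem heightFn_eq_sum (j : ℤ) (ω : Ω) :
    heightFn N0 e j ω = 2 * N0 ω + ∑ i ∈ Finset.Ioc 0 j, (1 - 2 * e i ω)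
      - ∑ i ∈ Finset.Ioc j 0, (1 - 2 * e i ω) := by
  unfold heightFn
  split_ifs with h1 h0
  · rw [Finset.Ioc_eq_empty_of_le (a := j) (b := 0) (by omega),
      ← Finset.Icc_add_one_left_eq_Ioc]
    simp
  · subst h0; simp
  · rw [Finset.Ioc_eq_empty_of_le (a := 0) (b := j) (by omega),
      ← Finset.Icc_add_one_left_eq_Ioc]
    simp

theorem heightFn_zero (ω : Ω) : heightFn N0 e 0 ω = 2 * N0 ω := by
  simp [heightFn]

theorem heightFn_add_one (j : ℤ) (ω : Ω) :
    heightFn N0 e (j + 1) ω = heightFn N0 e j ω + (1 - 2 * e (j + 1) ω) := by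
  simp only [heightFn_eq_sum]
  rcases le_or_gt 0 j with hj | hj
  · rw [← Finset.insert_Ioc_right_eq_Ioc_add_one hj, Finset.sum_insert (by simp),
      Finset.Ioc_eq_empty_of_le (a := j + 1) (b := 0) (by omega),
      Finset.Ioc_eq_empty_of_le (a := j) (b := 0) hj]
    ring
  · rw [← Finset.insert_Ioc_add_one_left_eq_Ioc hj, Finset.sum_insert (by simp),
      Finset.Ioc_eq_empty_of_le (a := 0) (b := j + 1) (by omega),
      Finset.Ioc_eq_empty_of_le (a := 0) (b := j) hj.le]
    ring

theorem heightFn_sub_one (j : ℤ) (ω : Ω) :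
    heightFn N0 e (j - 1) ω = heightFn N0 e j ω - (1 - 2 * e j ω) := by
  rw [← sub_add_cancel j 1, heightFn_add_one, add_sub_cancel_right]
  ring

theorem measurable_heightFn [MeasurableSpace Ω] (hN0 : Measurable N0)
    (he : ∀ i, Measurable (e i)) (j : ℤ) : Measurable (heightFn N0 e j) := by
  simp only [funext (heightFn_eq_sum N0 e j)]
  fun_prop

theorem memLp_heightFn [MeasurableSpace Ω] {μ : Measure Ω} [IsFiniteMeasure μ]
    {p : ENNReal} (hN0 : MemLp N0 p μ) (he : ∀ i, MemLp (e i) p μ) (j : ℤ) :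
    MemLp (heightFn N0 e j) p μ := by
  have hstep : ∀ i, MemLp (fun ω => 1 - 2 * e i ω) p μ :=
    fun i => (memLp_const 1).sub ((he i).const_mul 2)
  simp only [funext (heightFn_eq_sum N0 e j)]
  exact ((hN0.const_mul 2).add (memLp_finsetSum _ fun i _ => hstep i)).sub
    (memLp_finsetSum _ fun i _ => hstep i)

theorem heightFn_shift_eq {N1 : Ω → ℝ} {e0 : ℤ → Ω → ℝ} {ω : Ω}
    (hc : N1 ω - N0 ω = e0 1 ω - e 1 ω) (j : ℤ) :
    heightFn N1 (fun k => e (k + 1)) j ω = heightFn N0 e (j + 1) ω + 2 * e0 1 ω - 1 := by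
  induction j using Int.induction_on with
  | zero =>
    have h1 := heightFn_add_one N0 e 0 ω
    rw [zero_add, heightFn_zero] at h1
    rw [zero_add, h1, heightFn_zero]
    linarith
  | succ k ih => rw [heightFn_add_one, heightFn_add_one N0, ih]; ring
  | pred k ih => rw [heightFn_sub_one, sub_add_cancel, ih, heightFn_add_one N0]; ring

end HeightFunction

section Stationarity

variable {Ω : Type*} [MeasurableSpace Ω] {μ : Measure Ω}

theorem measurable_shiftTuple {η η0 ηt ηt0 N Nt : ℤ → Ω → ℝ} (hη : ∀ i, Measurable (η i))
    (hη0 : ∀ i, Measurable (η0 i)) (hηt : ∀ i, Measurable (ηt i))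
    (hηt0 : ∀ i, Measurable (ηt0 i)) (hN : ∀ i, Measurable (N i)) (hNt : ∀ i, Measurable (Nt i))
    (k : ℤ) : Measurable (shiftTuple η η0 ηt ηt0 N Nt k) := by
  unfold shiftTuple
  fun_prop

theorem ProbabilityTheory.IdentDistrib.shiftTuple_swap {a a0 b b0 Ma Mb : ℤ → Ω → ℝ} {k : ℤ}
    (h : IdentDistrib (shiftTuple a a0 b b0 Ma Mb k) (shiftTuple a a0 b b0 Ma Mb 0) μ μ) :
    IdentDistrib (shiftTuple b b0 a a0 Mb Ma k) (shiftTuple b b0 a a0 Mb Ma 0) μ μ := by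
  have := h.comp (u := fun t => (t.2.2.1, t.2.2.2.1, t.1, t.2.1, t.2.2.2.2.2, t.2.2.2.2.1))
    (by fun_prop)
  exact this

variable {e e0 f f0 M Mf : ℤ → Ω → ℝ}

theorem integral_mul_shift_eq
    (hstat : IdentDistrib (shiftTuple e e0 f f0 M Mf 1) (shiftTuple e e0 f f0 M Mf 0) μ μ)
    (a b : ℤ) :
    ∫ ω, e (a + 1) ω * f (b + 1) ω ∂μ = ∫ ω, e a ω * f b ω ∂μ := by
  simpa [shiftTuple] using (hstat.comp (u := fun t => t.1 a * t.2.2.1 b) (by fun_prop)).integral_eq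

theorem integral_heightFn_mul_sub_succ [IsProbabilityMeasure μ]
    (hstat : IdentDistrib (shiftTuple e e0 f f0 M Mf 1) (shiftTuple e e0 f f0 M Mf 0) μ μ)
    (hcons : ∀ᵐ ω ∂μ, M 1 ω - M 0 ω = e0 1 ω - e 1 ω)
    (hM : MemLp (M 0) 2 μ) (he : ∀ i, MemLp (e i) 2 μ) (he0 : MemLp (e0 1) 2 μ)
    (hf : ∀ i, MemLp (f i) 2 μ) (a b : ℤ) :
    ∫ ω, heightFn (M 0) e a ω * f b ω ∂μ - ∫ ω, heightFn (M 0) e a ω * f (b + 1) ω ∂μ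
      = 2 * ∫ ω, f b ω * e0 0 ω ∂μ - 2 * ∫ ω, e a ω * f b ω ∂μ := by
  have hh : ∀ j, MemLp (heightFn (M 0) e j) 2 μ := memLp_heightFn _ _ hM he
  have stat_h : ∫ ω, heightFn (M 0) e (a - 1) ω * f b ω ∂μ
      = ∫ ω, heightFn (M 1) (fun k => e (k + 1)) (a - 1) ω * f (b + 1) ω ∂μ := by
    have hG : Measurable fun t : (ℤ → ℝ) × (ℤ → ℝ) × (ℤ → ℝ) × (ℤ → ℝ) × (ℤ → ℝ) × (ℤ → ℝ) =>
        heightFn (fun t => t.2.2.2.2.1 0) (fun i t => t.1 i) (a - 1) t * t.2.2.1 b :=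
      (measurable_heightFn _ _ (by fun_prop) (fun i => by fun_prop) _).mul (by fun_prop)
    have := (hstat.comp hG).integral_eq
    simp only [Function.comp_def, shiftTuple, add_zero] at this
    exact this.symm
  have stat_e0 : ∫ ω, f (b + 1) ω * e0 1 ω ∂μ = ∫ ω, f b ω * e0 0 ω ∂μ := by
    simpa [shiftTuple] using
      (hstat.comp (u := fun t => t.2.2.1 b * t.2.1 0) (by fun_prop)).integral_eq
  have stat_f : ∫ ω, f (b + 1) ω ∂μ = ∫ ω, f b ω ∂μ := by
    simpa [shiftTuple] using (hstat.comp (u := fun t => t.2.2.1 b) (by fun_prop)).integral_eq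
  have cons : ∀ᵐ ω ∂μ, heightFn (M 1) (fun k => e (k + 1)) (a - 1) ω * f (b + 1) ω
      = heightFn (M 0) e a ω * f (b + 1) ω + 2 * (f (b + 1) ω * e0 1 ω) - f (b + 1) ω := by
    filter_upwards [hcons] with ω hc
    rw [heightFn_shift_eq (M 0) e hc, sub_add_cancel]
    ring
  have step_down : ∫ ω, heightFn (M 0) e a ω * f b ω ∂μ
      = ∫ ω, heightFn (M 0) e (a - 1) ω * f b ω ∂μ + ∫ ω, f b ω ∂μ
        - 2 * ∫ ω, e a ω * f b ω ∂μ := by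
    have : (fun ω => heightFn (M 0) e a ω * f b ω)
        = fun ω => heightFn (M 0) e (a - 1) ω * f b ω + f b ω - 2 * (e a ω * f b ω) := by
      funext ω
      rw [heightFn_sub_one]
      ring
    rw [this, integral_sub, integral_add, integral_const_mul]
    · exact (hh _).integrable_mul (hf b)
    · exact (hf b).integrable one_le_two
    · exact ((hh _).integrable_mul (hf b)).add ((hf b).integrable one_le_two)
    · exact ((he a).integrable_mul (hf b)).const_mul 2
  have step_shift : ∫ ω, heightFn (M 0) e (a - 1) ω * f b ω ∂μ
      = ∫ ω, heightFn (M 0) e a ω * f (b + 1) ω ∂μ + 2 * ∫ ω, f (b + 1) ω * e0 1 ω ∂μ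
        - ∫ ω, f (b + 1) ω ∂μ := by
    rw [stat_h, integral_congr_ae cons, integral_sub, integral_add, integral_const_mul]
    · exact (hh _).integrable_mul (hf _)
    · exact ((hf _).integrable_mul he0).const_mul 2
    · exact ((hh _).integrable_mul (hf _)).add (((hf _).integrable_mul he0).const_mul 2)
    · exact (hf _).integrable one_le_two
  rw [step_down, step_shift, stat_e0, stat_f]
  ring

end Stationarity

section Covariance

variable {Ω : Type*} [MeasurableSpace Ω] {μ : Measure Ω} [IsProbabilityMeasure μ]
  {X Y A B : Ω → ℝ}

theorem covariance_add_const_sub_mul (hX : MemLp X 2 μ) (hY : MemLp Y 2 μ)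
    (hA : MemLp A 2 μ) (hB : MemLp B 2 μ) (c d : ℝ) :
    cov[fun ω => X ω + (d - c * A ω), fun ω => Y ω + (d - c * B ω); μ]
      = cov[X, Y; μ] - c * cov[X, B; μ] - c * cov[A, Y; μ] + c ^ 2 * cov[A, B; μ] := by
  have hXA := hX.sub (hA.const_mul c)
  have hYB := hY.sub (hB.const_mul c)
  calc cov[fun ω => X ω + (d - c * A ω), fun ω => Y ω + (d - c * B ω); μ]
      = cov[fun ω => (X ω - c * A ω) + d, fun ω => (Y ω - c * B ω) + d; μ] := by
        congr 1 <;> funext ω <;> ring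
    _ = cov[fun ω => X ω - c * A ω, fun ω => Y ω - c * B ω; μ] := by
        rw [covariance_add_const_left (X := fun ω => X ω - c * A ω) (hXA.integrable one_le_two),
          covariance_add_const_right (Y := fun ω => Y ω - c * B ω) (hYB.integrable one_le_two)]
    _ = _ := by
        rw [covariance_fun_sub_fun_sub hX (hA.const_mul c) hY (hB.const_mul c),
          covariance_const_mul_left, covariance_const_mul_right, covariance_const_mul_left,
          covariance_const_mul_right]
        ring

theorem covariance_second_difference {A' B' : Ω → ℝ} (hX : MemLp X 2 μ) (hY : MemLp Y 2 μ)
    (hA : MemLp A 2 μ) (hB : MemLp B 2 μ) (hA' : MemLp A' 2 μ) (hB' : MemLp B' 2 μ) :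
    cov[fun ω => X ω + (1 - 2 * A ω), fun ω => Y ω + (1 - 2 * B ω); μ] - 2 * cov[X, Y; μ]
        + cov[fun ω => X ω - (1 - 2 * A' ω), fun ω => Y ω - (1 - 2 * B' ω); μ]
      = 2 * (cov[X, B'; μ] - cov[X, B; μ]) + 2 * (cov[Y, A'; μ] - cov[Y, A; μ])
        + 4 * cov[A, B; μ] + 4 * cov[A', B'; μ] := by
  have minus : cov[fun ω => X ω - (1 - 2 * A' ω), fun ω => Y ω - (1 - 2 * B' ω); μ]
      = cov[fun ω => X ω + (-1 - (-2) * A' ω), fun ω => Y ω + (-1 - (-2) * B' ω); μ] := by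
    congr 1 <;> funext ω <;> ring
  rw [minus, covariance_add_const_sub_mul hX hY hA hB, covariance_add_const_sub_mul hX hY hA' hB',
    covariance_comm A Y, covariance_comm A' Y]
  ring

end Covariance

theorem covFn_eq_covariance {Ω : Type*} [MeasureSpace Ω]
    [IsProbabilityMeasure (volume : Measure Ω)] {X Y : Ω → ℝ} (hX : MemLp X 2) (hY : MemLp Y 2) :
    covFn X Y = cov[X, Y] := by
  rw [covariance_eq_sub hX hY]
  rfl

theorem covFn_heightFn_second_difference {Ω : Type*} [MeasureSpace Ω]
    [IsProbabilityMeasure (volume : Measure Ω)] {M Mt : Ω → ℝ} {e f : ℤ → Ω → ℝ}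
    (hM : MemLp M 2) (hMt : MemLp Mt 2) (he : ∀ k, MemLp (e k) 2) (hf : ∀ k, MemLp (f k) 2)
    (a b : ℤ) :
    covFn (heightFn M e (a + 1)) (heightFn Mt f (b + 1))
        - 2 * covFn (heightFn M e a) (heightFn Mt f b)
        + covFn (heightFn M e (a - 1)) (heightFn Mt f (b - 1))
      = 2 * (cov[heightFn M e a, f b] - cov[heightFn M e a, f (b + 1)])
        + 2 * (cov[heightFn Mt f b, e a] - cov[heightFn Mt f b, e (a + 1)])
        + 4 * cov[e (a + 1), f (b + 1)] + 4 * cov[e a, f b] := by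
  have hh := memLp_heightFn M e hM he
  have hht := memLp_heightFn Mt f hMt hf
  rw [covFn_eq_covariance (hh _) (hht _), covFn_eq_covariance (hh _) (hht _),
    covFn_eq_covariance (hh _) (hht _), funext (heightFn_add_one M e a),
    funext (heightFn_add_one Mt f b), funext (heightFn_sub_one M e a),
    funext (heightFn_sub_one Mt f b)]
  exact covariance_second_difference (hh a) (hht b) (he _) (hf _) (he _) (hf _)

theorem memLp_of_forall_eq_zero_or_one {Ω : Type*} [MeasurableSpace Ω] {μ : Measure Ω}
    [IsFiniteMeasure μ] {p : ENNReal} {g : Ω → ℝ} (hg : Measurable g)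
    (h01 : ∀ ω, g ω = 0 ∨ g ω = 1) : MemLp g p μ :=
  MemLp.of_bound hg.aestronglyMeasurable 1 <| ae_of_all _ fun ω => by
    rcases h01 ω with h | h <;> simp [h]

theorem sum_mixed_correlations_formula_general
    {Ω : Type*} [MeasureSpace Ω] [IsProbabilityMeasure (volume : Measure Ω)]
    (ρ ρt : ℝ)
    (η η0 ηt ηt0 N Nt : ℤ → Ω → ℝ)
    (hmeas : ∀ i : ℤ, Measurable (η i) ∧ Measurable (η0 i) ∧ Measurable (ηt i) ∧
      Measurable (ηt0 i) ∧ Measurable (N i) ∧ Measurable (Nt i))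
    (hval : ∀ (i : ℤ) (ω : Ω), (η i ω = 0 ∨ η i ω = 1) ∧ (η0 i ω = 0 ∨ η0 i ω = 1) ∧
      (ηt i ω = 0 ∨ ηt i ω = 1) ∧ (ηt0 i ω = 0 ∨ ηt0 i ω = 1))
    (hNL2 : ∀ k : ℤ, MemLp (N k) 2 (volume : Measure Ω) ∧
      MemLp (Nt k) 2 (volume : Measure Ω))
    (hmean : ∀ i : ℤ, (∫ ω, η i ω = ρ) ∧ (∫ ω, η0 i ω = ρ) ∧
      (∫ ω, ηt i ω = ρt) ∧ (∫ ω, ηt0 i ω = ρt))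
    (hshift : ∀ k : ℤ,
      Measure.map (shiftTuple η η0 ηt ηt0 N Nt k) (volume : Measure Ω)
        = Measure.map (shiftTuple η η0 ηt ηt0 N Nt 0) (volume : Measure Ω))
    (hcons : ∀ᵐ ω ∂(volume : Measure Ω), ∀ k : ℤ,
      N k ω - N (k - 1) ω = η0 k ω - η k ω ∧
      Nt k ω - Nt (k - 1) ω = ηt0 k ω - ηt k ω) :
    ∀ x xt i : ℤ,
      ((∫ ω, η (x + i) ω * ηt0 0 ω) - ρ * ρt)
        + ((∫ ω, ηt (xt + i) ω * η0 0 ω) - ρ * ρt)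
      = (1/4) * (covFn (heightFn (N 0) η (x + (i + 1))) (heightFn (Nt 0) ηt (xt + (i + 1)))
          - 2 * covFn (heightFn (N 0) η (x + i)) (heightFn (Nt 0) ηt (xt + i))
          + covFn (heightFn (N 0) η (x + (i - 1))) (heightFn (Nt 0) ηt (xt + (i - 1)))) := by
  intro x xt i
  have hη k : MemLp (η k) 2 := memLp_of_forall_eq_zero_or_one (hmeas k).1 (hval k · |>.1)
  have hη0 k : MemLp (η0 k) 2 := memLp_of_forall_eq_zero_or_one (hmeas k).2.1 (hval k · |>.2.1)
  have hηt k : MemLp (ηt k) 2 :=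
    memLp_of_forall_eq_zero_or_one (hmeas k).2.2.1 (hval k · |>.2.2.1)
  have hηt0 k : MemLp (ηt0 k) 2 :=
    memLp_of_forall_eq_zero_or_one (hmeas k).2.2.2.1 (hval k · |>.2.2.2)
  have htuple k : Measurable (shiftTuple η η0 ηt ηt0 N Nt k) :=
    measurable_shiftTuple (hmeas · |>.1) (hmeas · |>.2.1) (hmeas · |>.2.2.1)
      (hmeas · |>.2.2.2.1) (hmeas · |>.2.2.2.2.1) (hmeas · |>.2.2.2.2.2) k
  have hstat : IdentDistrib (shiftTuple η η0 ηt ηt0 N Nt 1) (shiftTuple η η0 ηt ηt0 N Nt 0)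
      volume volume := ⟨(htuple 1).aemeasurable, (htuple 0).aemeasurable, hshift 1⟩
  have hcons1 := hcons.mono fun ω h => h 1
  set a := x + i
  set b := xt + i
  have corr := integral_heightFn_mul_sub_succ hstat (hcons1.mono fun _ h => h.1) (hNL2 0).1 hη
    (hη0 1) hηt a b
  have corr_t := integral_heightFn_mul_sub_succ hstat.shiftTuple_swap
    (hcons1.mono fun _ h => h.2) (hNL2 0).2 hηt (hηt0 1) hη b a
  have diag := integral_mul_shift_eq hstat a b
  have hcomm : ∫ ω, ηt b ω * η a ω = ∫ ω, η a ω * ηt b ω := by simp only [mul_comm]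
  rw [show x + (i + 1) = a + 1 by ring, show xt + (i + 1) = b + 1 by ring,
    show x + (i - 1) = a - 1 by ring, show xt + (i - 1) = b - 1 by ring,
    covFn_heightFn_second_difference (hNL2 0).1 (hNL2 0).2 hη hηt a b]
  have hh := memLp_heightFn (N 0) η (hNL2 0).1 hη a
  have hht := memLp_heightFn (Nt 0) ηt (hNL2 0).2 hηt b
  simp only [covariance_eq_sub hh (hηt _), covariance_eq_sub hht (hη _),
    covariance_eq_sub (hη _) (hηt _), Pi.mul_apply, (hmean _).1, (hmean _).2.2.1]
  linear_combination (-1/2 : ℝ) * corr - (1/2 : ℝ) * corr_t + hcomm - diag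

/-- Formula for the sum of the off-diagonal two-point functions of the stationary
two-species (T)ASEP: S^#_{1,2}(x+i,t) + S^#_{2,1}(x̃+i,t̃)
= (1/4) Δᵢ Cov(h(x+i), h̃(x̃+i)). -/
theorem sum_mixed_correlations_formula
    {Ω : Type*} [MeasureSpace Ω] [IsProbabilityMeasure (volume : Measure Ω)]
    (ρ ρt : ℝ) (hρ : ρ ∈ Set.Ioo (0:ℝ) 1) (hρt : ρt ∈ Set.Ioo (0:ℝ) 1)
    (η η0 ηt ηt0 N Nt : ℤ → Ω → ℝ)
    (hmeas : ∀ i : ℤ, Measurable (η i) ∧ Measurable (η0 i) ∧ Measurable (ηt i) ∧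
      Measurable (ηt0 i) ∧ Measurable (N i) ∧ Measurable (Nt i))
    (hval : ∀ (i : ℤ) (ω : Ω), (η i ω = 0 ∨ η i ω = 1) ∧ (η0 i ω = 0 ∨ η0 i ω = 1) ∧
      (ηt i ω = 0 ∨ ηt i ω = 1) ∧ (ηt0 i ω = 0 ∨ ηt0 i ω = 1))
    (hNint : ∀ (k : ℤ) (ω : Ω), (∃ n : ℤ, N k ω = n) ∧ (∃ n : ℤ, Nt k ω = n))
    (hNL2 : ∀ k : ℤ, MemLp (N k) 2 (volume : Measure Ω) ∧
      MemLp (Nt k) 2 (volume : Measure Ω))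
    (hmean : ∀ i : ℤ, (∫ ω, η i ω = ρ) ∧ (∫ ω, η0 i ω = ρ) ∧
      (∫ ω, ηt i ω = ρt) ∧ (∫ ω, ηt0 i ω = ρt))
    (hshift : ∀ k : ℤ,
      Measure.map (shiftTuple η η0 ηt ηt0 N Nt k) (volume : Measure Ω)
        = Measure.map (shiftTuple η η0 ηt ηt0 N Nt 0) (volume : Measure Ω))
    (hcons : ∀ᵐ ω ∂(volume : Measure Ω), ∀ k : ℤ,
      N k ω - N (k - 1) ω = η0 k ω - η k ω ∧
      Nt k ω - Nt (k - 1) ω = ηt0 k ω - ηt k ω) :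
    ∀ x xt i : ℤ,
      ((∫ ω, η (x + i) ω * ηt0 0 ω) - ρ * ρt)
        + ((∫ ω, ηt (xt + i) ω * η0 0 ω) - ρ * ρt)
      = (1/4) * (covFn (heightFn (N 0) η (x + (i + 1))) (heightFn (Nt 0) ηt (xt + (i + 1)))
          - 2 * covFn (heightFn (N 0) η (x + i)) (heightFn (Nt 0) ηt (xt + i))
          + covFn (heightFn (N 0) η (x + (i - 1))) (heightFn (Nt 0) ηt (xt + (i - 1)))) :=
  sum_mixed_correlations_formula_general ρ ρt η η0 ηt ηt0 N Nt hmeas hval hNL2 hmean hshift hcons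
end

section
/- Let ρ1 ∈ (0,1) and ρ2 ∈ (0,1−ρ1), and set θ = log((ρ1(1−ρ1−ρ2)+ρ2)/(ρ1(1−ρ1−ρ2))). Then θ > 0, and for any two independent random variables Z and Y on a probability space with P(Z=1) = ρ1 = 1 − P(Z=0) and P(Y=1) = ρ1+ρ2 = 1 − P(Y=0), one has E[exp(θ·(Z−Y))] = 1; equivalently, ρ1(1−ρ1−ρ2)·e^θ + (1−ρ1)(ρ1+ρ2)·e^{−θ} + ρ1(ρ1+ρ2) + (1−ρ1)(1−ρ1−ρ2) = 1. -/
/-!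
With `a = ρ1(1−ρ1−ρ2)` and `b = (1−ρ1)(ρ1+ρ2) = a + ρ2`, the Lundberg exponent is
`θ = log (b / a) > 0`, so `a e^θ = b` and `b e^{−θ} = a`. By independence the exponential moment
factors as `E[e^{θZ}] E[e^{−θY}] = (ρ1 e^θ + 1 − ρ1)((ρ1+ρ2) e^{−θ} + 1 − ρ1 − ρ2)`, whose
expansion is the left side of the algebraic identity; there the cross terms `a e^θ + b e^{−θ}`
collapse to `a + b`, and the four products of probabilities sum to `1`.
-/

open MeasureTheory ProbabilityTheory

/-- The Lundberg exponent θ = log((ρ1(1−ρ1−ρ2)+ρ2)/(ρ1(1−ρ1−ρ2))). -/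
noncomputable def lundbergExponent (ρ1 ρ2 : ℝ) : ℝ :=
  Real.log ((ρ1*(1 - ρ1 - ρ2) + ρ2) / (ρ1*(1 - ρ1 - ρ2)))

open Real

lemma mul_exp_log_div_add_mul_exp_neg_log_div {a b : ℝ} (ha : 0 < a) (hb : 0 < b) :
    a * exp (log (b / a)) + b * exp (-log (b / a)) = a + b := by
  rw [exp_neg, exp_log (div_pos hb ha), inv_div]
  field_simp
  ring

section Bernoulli

variable {Ω : Type*} [MeasurableSpace Ω] {μ : Measure Ω} [IsProbabilityMeasure μ]
  {X : Ω → ℝ} {p : ℝ}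

lemma ae_eq_one_or_eq_zero_of_measure_eq (hX : Measurable X) (hp0 : 0 ≤ p) (hp1 : p ≤ 1)
    (h1 : μ {ω | X ω = 1} = ENNReal.ofReal p) (h0 : μ {ω | X ω = 0} = ENNReal.ofReal (1 - p)) :
    ∀ᵐ ω ∂μ, X ω = 1 ∨ X ω = 0 := by
  have hm1 : MeasurableSet {ω | X ω = 1} := hX (measurableSet_singleton 1)
  have hm0 : MeasurableSet {ω | X ω = 0} := hX (measurableSet_singleton 0)
  have hdisj : Disjoint {ω | X ω = 1} {ω | X ω = 0} :=
    Set.disjoint_left.2 fun ω h1 h0 => one_ne_zero (h1.symm.trans h0)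
  have hunion : μ ({ω | X ω = 1} ∪ {ω | X ω = 0}) = 1 := by
    rw [measure_union hdisj hm0, h1, h0, ← ENNReal.ofReal_add hp0 (sub_nonneg.2 hp1),
      add_sub_cancel, ENNReal.ofReal_one]
  exact (ae_mem_iff_measure_eq (hm1.union hm0).nullMeasurableSet).2 (by rw [hunion, measure_univ])

lemma integral_comp_eq_of_measure_eq (f : ℝ → ℝ) (hX : Measurable X) (hp0 : 0 ≤ p)
    (hp1 : p ≤ 1) (h1 : μ {ω | X ω = 1} = ENNReal.ofReal p)
    (h0 : μ {ω | X ω = 0} = ENNReal.ofReal (1 - p)) :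
    ∫ ω, f (X ω) ∂μ = p * f 1 + (1 - p) * f 0 := by
  have hm1 : MeasurableSet {ω | X ω = 1} := hX (measurableSet_singleton 1)
  have hm0 : MeasurableSet {ω | X ω = 0} := hX (measurableSet_singleton 0)
  have hae : (fun ω => f (X ω)) =ᵐ[μ]
      fun ω => {ω | X ω = 1}.indicator (fun _ => f 1) ω
        + {ω | X ω = 0}.indicator (fun _ => f 0) ω := by
    filter_upwards [ae_eq_one_or_eq_zero_of_measure_eq hX hp0 hp1 h1 h0] with ω hω
    rcases hω with hω | hω <;> simp [hω]
  rw [integral_congr_ae hae, integral_add ((integrable_const _).indicator hm1)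
      ((integrable_const _).indicator hm0), integral_indicator_const _ hm1,
    integral_indicator_const _ hm0, measureReal_def, measureReal_def, h1, h0,
    ENNReal.toReal_ofReal hp0, ENNReal.toReal_ofReal (sub_nonneg.2 hp1), smul_eq_mul, smul_eq_mul]

lemma integral_exp_mul_sub_of_indepFun {Z Y : Ω → ℝ} {q : ℝ} (θ : ℝ) (hZ : Measurable Z)
    (hY : Measurable Y) (hZY : IndepFun Z Y μ) (hp0 : 0 ≤ p) (hp1 : p ≤ 1) (hq0 : 0 ≤ q)
    (hq1 : q ≤ 1) (hZ1 : μ {ω | Z ω = 1} = ENNReal.ofReal p)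
    (hZ0 : μ {ω | Z ω = 0} = ENNReal.ofReal (1 - p)) (hY1 : μ {ω | Y ω = 1} = ENNReal.ofReal q)
    (hY0 : μ {ω | Y ω = 0} = ENNReal.ofReal (1 - q)) :
    ∫ ω, exp (θ * (Z ω - Y ω)) ∂μ = (p * exp θ + (1 - p)) * (q * exp (-θ) + (1 - q)) := by
  have hfactor : ∫ ω, exp (θ * (Z ω - Y ω)) ∂μ =
      (∫ ω, exp (θ * Z ω) ∂μ) * ∫ ω, exp (-θ * Y ω) ∂μ := by
    simp_rw [mul_sub, sub_eq_add_neg, exp_add, ← neg_mul]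
    exact hZY.integral_comp_mul_comp (f := fun z => exp (θ * z)) (g := fun y => exp (-θ * y))
      hZ.aemeasurable hY.aemeasurable (by fun_prop) (by fun_prop)
  rw [hfactor, integral_comp_eq_of_measure_eq (fun z => exp (θ * z)) hZ hp0 hp1 hZ1 hZ0,
    integral_comp_eq_of_measure_eq (fun y => exp (-θ * y)) hY hq0 hq1 hY1 hY0]
  simp only [mul_one, mul_zero, exp_zero]

end Bernoulli

section LundbergExponent

variable {ρ1 ρ2 : ℝ}

lemma lundbergExponent_eq (ρ1 ρ2 : ℝ) :
    lundbergExponent ρ1 ρ2 = log ((1 - ρ1) * (ρ1 + ρ2) / (ρ1 * (1 - ρ1 - ρ2))) := by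
  unfold lundbergExponent
  congr 2
  ring

lemma lundbergExponent_pos (hρ1 : 0 < ρ1) (hρ2 : 0 < ρ2) (hρ : ρ1 + ρ2 < 1) :
    0 < lundbergExponent ρ1 ρ2 := by
  have ha : 0 < ρ1 * (1 - ρ1 - ρ2) := mul_pos hρ1 (by linarith)
  rw [lundbergExponent_eq]
  exact log_pos ((one_lt_div ha).2 (by nlinarith))

lemma lundbergExponent_balance (hρ1 : 0 < ρ1) (hρ2 : 0 < ρ2) (hρ : ρ1 + ρ2 < 1) :
    ρ1*(1 - ρ1 - ρ2) * exp (lundbergExponent ρ1 ρ2)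
      + (1 - ρ1)*(ρ1 + ρ2) * exp (-(lundbergExponent ρ1 ρ2))
      + ρ1*(ρ1 + ρ2) + (1 - ρ1)*(1 - ρ1 - ρ2) = 1 := by
  rw [lundbergExponent_eq, mul_exp_log_div_add_mul_exp_neg_log_div (mul_pos hρ1 (by linarith))
    (mul_pos (by linarith) (by linarith))]
  ring

end LundbergExponent

/-- The Lundberg exponent is positive, the exponential moment of θ(Z−Y) equals 1
for independent Z ~ Ber(ρ1), Y ~ Ber(ρ1+ρ2), and the equivalent algebraic identity. -/
theorem lundberg_exponent_property
    (ρ1 ρ2 : ℝ) (h1 : ρ1 ∈ Set.Ioo (0:ℝ) 1) (h2 : ρ2 ∈ Set.Ioo (0:ℝ) (1 - ρ1)) :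
    0 < lundbergExponent ρ1 ρ2 ∧
    (∀ (Ω : Type) [MeasureSpace Ω] [IsProbabilityMeasure (volume : Measure Ω)]
      (Z Y : Ω → ℝ), Measurable Z → Measurable Y → IndepFun Z Y volume →
      volume {ω | Z ω = 1} = ENNReal.ofReal ρ1 →
      volume {ω | Z ω = 0} = ENNReal.ofReal (1 - ρ1) →
      volume {ω | Y ω = 1} = ENNReal.ofReal (ρ1 + ρ2) →
      volume {ω | Y ω = 0} = ENNReal.ofReal (1 - ρ1 - ρ2) →
      ∫ ω, Real.exp (lundbergExponent ρ1 ρ2 * (Z ω - Y ω)) = 1) ∧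
    ρ1*(1 - ρ1 - ρ2) * Real.exp (lundbergExponent ρ1 ρ2)
      + (1 - ρ1)*(ρ1 + ρ2) * Real.exp (-(lundbergExponent ρ1 ρ2))
      + ρ1*(ρ1 + ρ2) + (1 - ρ1)*(1 - ρ1 - ρ2) = 1 := by
  obtain ⟨hρ1, hρ1'⟩ := h1
  obtain ⟨hρ2, hρ2'⟩ := h2
  have hρ : ρ1 + ρ2 < 1 := by linarith
  have hbalance := lundbergExponent_balance hρ1 hρ2 hρ
  refine ⟨lundbergExponent_pos hρ1 hρ2 hρ, fun Ω _ _ Z Y hZ hY hZY hZ1 hZ0 hY1 hY0 => ?_, hbalance⟩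
  rw [sub_sub] at hY0
  rw [integral_exp_mul_sub_of_indepFun _ hZ hY hZY hρ1.le hρ1'.le (by linarith) hρ.le
    hZ1 hZ0 hY1 hY0]
  have hinv : exp (lundbergExponent ρ1 ρ2) * exp (-lundbergExponent ρ1 ρ2) = 1 := by
    rw [← exp_add, add_neg_cancel, exp_zero]
  linear_combination hbalance + ρ1 * (ρ1 + ρ2) * hinv
end

section
/- Let a, s : ℤ → {0,1} be sequences such that for every i ∈ ℤ the set {∑_{k=i}^{j}(a(k)−s(k)) : j ≥ i−1} (with the empty sum for j = i−1 equal to 0) is bounded above, define the queue length Q(i) as its supremum, and define the departure indicator d(i) = a(i) + Q(i+1) − Q(i). Then for every i ∈ ℤ: d(i) ∈ {0,1}, d(i) ≤ s(i), and d(i) = 1 if and only if s(i) = 1 and (a(i) = 1 or Q(i+1) ≥ 1). -/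
/-!
Peeling off the first term of the partial sums gives Lindley's recursion
`Q(i) = max 0 (a(i) - s(i) + Q(i+1))`. Substituting it into the definition of `d(i)` yields
`d(i) = min (a(i) + Q(i+1)) (s(i))`, from which every claim is read off using `Q(i+1) ≥ 0`.
-/

/-- The set of partial sums ∑_{k=i}^{j} (a(k) − s(k)) over j ≥ i−1
(with the empty sum for j = i−1 equal to 0). -/
def queueSet (a s : ℤ → ℤ) (i : ℤ) : Set ℤ :=
  {x | ∃ j : ℤ, i - 1 ≤ j ∧ x = ∑ k ∈ Finset.Icc i j, (a k - s k)}

/-- The queue length at site i: the supremum of the partial sums. -/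
noncomputable def queueLen (a s : ℤ → ℤ) (i : ℤ) : ℤ := sSup (queueSet a s i)

/-- The departure indicator at site i. -/
noncomputable def departure (a s : ℤ → ℤ) (i : ℤ) : ℤ :=
  a i + queueLen a s (i + 1) - queueLen a s i

open Finset

namespace queueSet

variable (a s : ℤ → ℤ) (i : ℤ)

theorem zero_mem : (0 : ℤ) ∈ queueSet a s i :=
  ⟨i - 1, le_rfl, by rw [Icc_eq_empty (by omega), sum_empty]⟩

private theorem sum_Icc_eq_add {j : ℤ} (h : i ≤ j) :
    ∑ k ∈ Icc i j, (a k - s k) = a i - s i + ∑ k ∈ Icc (i + 1) j, (a k - s k) := by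
  rw [Icc_eq_cons_Ioc h, sum_cons, Icc_add_one_left_eq_Ioc]

theorem eq_insert_zero_image :
    queueSet a s i = insert 0 (OrderIso.addLeft (a i - s i) '' queueSet a s (i + 1)) := by
  ext x
  simp only [queueSet, Set.mem_insert_iff, Set.mem_image, Set.mem_ofPred_eq,
    OrderIso.addLeft_apply]
  constructor
  · rintro ⟨j, hj, rfl⟩
    rcases hj.eq_or_lt with rfl | hij
    · exact Or.inl (by rw [Icc_eq_empty (by omega), sum_empty])
    · exact Or.inr ⟨_, ⟨j, by omega, rfl⟩, (sum_Icc_eq_add a s i (by omega)).symm⟩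
  · rintro (rfl | ⟨_, ⟨j, hj, rfl⟩, rfl⟩)
    · exact zero_mem a s i
    · exact ⟨j, by omega, (sum_Icc_eq_add a s i (by omega)).symm⟩

end queueSet

theorem queueLen_nonneg {a s : ℤ → ℤ} {i : ℤ} (h : BddAbove (queueSet a s i)) :
    0 ≤ queueLen a s i :=
  le_csSup h (queueSet.zero_mem a s i)

theorem queueLen_eq_max {a s : ℤ → ℤ} {i : ℤ} (h : BddAbove (queueSet a s (i + 1))) :
    queueLen a s i = max 0 (a i - s i + queueLen a s (i + 1)) := by
  have hne : (queueSet a s (i + 1)).Nonempty := ⟨0, queueSet.zero_mem a s (i + 1)⟩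
  rw [queueLen, queueSet.eq_insert_zero_image,
    csSup_insert ((OrderIso.addLeft _).monotone.map_bddAbove h) (hne.image _),
    ← OrderIso.map_csSup' _ hne h, OrderIso.addLeft_apply, queueLen]

theorem departure_eq_min {a s : ℤ → ℤ} {i : ℤ} (h : BddAbove (queueSet a s (i + 1))) :
    departure a s i = min (a i + queueLen a s (i + 1)) (s i) := by
  rw [departure, queueLen_eq_max h]
  omega

/-- The departure indicator takes values in {0,1}, is dominated by the service
indicator, and equals 1 precisely when there is a service and either an arrival
or a nonempty queue to the right. -/
theorem departure_characterisation (a s : ℤ → ℤ)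
    (hval : ∀ k : ℤ, (a k = 0 ∨ a k = 1) ∧ (s k = 0 ∨ s k = 1))
    (hbdd : ∀ i : ℤ, BddAbove (queueSet a s i)) :
    ∀ i : ℤ, (departure a s i = 0 ∨ departure a s i = 1) ∧
      departure a s i ≤ s i ∧
      (departure a s i = 1 ↔ s i = 1 ∧ (a i = 1 ∨ 1 ≤ queueLen a s (i + 1))) := by
  intro i
  obtain ⟨ha, hs⟩ := hval i
  have hQ := queueLen_nonneg (hbdd (i + 1))
  rw [departure_eq_min (hbdd (i + 1))]
  omega
end

section
/- Let a, s : ℤ → {0,1} be sequences such that for every i ∈ ℤ the set {∑_{k=i}^{j}(a(k)−s(k)) : j ≥ i−1} (with the empty sum for j = i−1 equal to 0) is bounded above, define the queue length Q(i) as its supremum, and define d(i) = a(i) + Q(i+1) − Q(i). For a sequence u : ℤ → {0,1}, define its height profile H_u : ℤ → ℤ by H_u(x) = x − 2∑_{k=1}^{x} u(k) for x ≥ 1, H_u(0) = 0, and H_u(x) = x + 2∑_{k=x+1}^{0} u(k) for x ≤ −1. Write ĥ = H_a, h̃ = H_s and h = H_d. Then for every x ∈ ℤ, the suprema sup_{j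 ≥ 0} {h̃(j) − ĥ(j)} and sup_{j ≥ x} {h̃(j) − h̃(x) − (ĥ(j) − ĥ(x))} are finite and h(x) = ĥ(x) + sup_{j ≥ 0} {h̃(j) − ĥ(j)} − sup_{j ≥ x} {h̃(j) − h̃(x) − (ĥ(j) − ĥ(x))}. -/
/-- The height profile associated with an occupation sequence u : ℤ → {0,1}. -/
noncomputable def heightProfile (u : ℤ → ℤ) (x : ℤ) : ℤ :=
  if 1 ≤ x then x - 2 * ∑ k ∈ Finset.Icc 1 x, u k
  else if x = 0 then 0
  else x + 2 * ∑ k ∈ Finset.Icc (x + 1) 0, u k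

open Finset

theorem funext_of_map_zero_of_sub_add_one {G : Type*} [AddGroup G] {f g : ℤ → G}
    (h₀ : f 0 = g 0) (hstep : ∀ x, f (x + 1) - f x = g (x + 1) - g x) : f = g := by
  funext x
  induction x using Int.induction_on with
  | zero => exact h₀
  | succ n ih => rw [← sub_add_cancel (f _) (f n), hstep, ih, sub_add_cancel]
  | pred n ih =>
    have h := hstep (-n - 1)
    rw [sub_add_cancel, ih] at h
    exact sub_right_inj.mp h

theorem sum_Icc_add_one_right {M : Type*} [AddCommMonoid M] (f : ℤ → M) {a b : ℤ}
    (h : a ≤ b + 1) : ∑ k ∈ Icc a (b + 1), f k = ∑ k ∈ Icc a b, f k + f (b + 1) := by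
  rw [← insert_Icc_right_eq_Icc_add_one h, sum_insert (by simp), add_comm]

theorem sum_Icc_add_one_left {M : Type*} [AddCommMonoid M] (f : ℤ → M) {a b : ℤ}
    (h : a ≤ b) : ∑ k ∈ Icc a b, f k = f a + ∑ k ∈ Icc (a + 1) b, f k := by
  rw [← insert_Icc_add_one_left_eq_Icc h, sum_insert (by simp)]

section HeightProfile

variable (u : ℤ → ℤ)

theorem heightProfile_zero : heightProfile u 0 = 0 := by
  simp [heightProfile]

theorem heightProfile_add_one (x : ℤ) :
    heightProfile u (x + 1) = heightProfile u x + 1 - 2 * u (x + 1) := by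
  rcases lt_trichotomy x (-1) with hx | rfl | hx
  · rw [heightProfile, heightProfile, if_neg (by omega), if_neg (by omega), if_neg (by omega),
      if_neg (by omega), sum_Icc_add_one_left u (show x + 1 ≤ 0 by omega)]
    ring
  · simp [heightProfile]
  · obtain rfl | hx := (show x = 0 ∨ 1 ≤ x by omega)
    · simp [heightProfile]
    · rw [heightProfile, heightProfile, if_pos (by omega), if_pos hx,
        sum_Icc_add_one_right u (by omega)]
      ring

theorem heightProfile_sub_of_le {x j : ℤ} (h : x ≤ j) :
    heightProfile u j - heightProfile u x = j - x - 2 * ∑ k ∈ Icc (x + 1) j, u k := by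
  induction j, h using Int.leInduction with
  | base => simp
  | succ n hn ih =>
    rw [heightProfile_add_one, sum_Icc_add_one_right u (by omega)]
    linear_combination ih

end HeightProfile

theorem heightProfile_departure (a s : ℤ → ℤ) (x : ℤ) :
    heightProfile (departure a s) x
      = heightProfile a x - 2 * (queueLen a s (x + 1) - queueLen a s 1) := by
  revert x
  rw [← funext_iff]
  refine funext_of_map_zero_of_sub_add_one (by simp [heightProfile_zero]) fun x ↦ ?_
  simp only [heightProfile_add_one, departure]
  ring

theorem isGreatest_queueSet {a s : ℤ → ℤ} {i : ℤ} (hbdd : BddAbove (queueSet a s i)) :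
    IsGreatest (queueSet a s i) (queueLen a s i) := by
  have hempty : (0 : ℤ) ∈ queueSet a s i := ⟨i - 1, le_rfl, by simp⟩
  exact ⟨Int.csSup_mem ⟨0, hempty⟩ hbdd, fun _ hz ↦ le_csSup hbdd hz⟩

theorem isGreatest_heightProfile_increment {a s : ℤ → ℤ} {x : ℤ}
    (hbdd : BddAbove (queueSet a s (x + 1))) :
    IsGreatest {y : ℤ | ∃ j : ℤ, x ≤ j ∧
        y = heightProfile s j - heightProfile s x - (heightProfile a j - heightProfile a x)}
      (2 * queueLen a s (x + 1)) := by
  have increment_eq {j : ℤ} (hj : x ≤ j) :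
      heightProfile s j - heightProfile s x - (heightProfile a j - heightProfile a x)
        = 2 * ∑ k ∈ Icc (x + 1) j, (a k - s k) := by
    rw [heightProfile_sub_of_le s hj, heightProfile_sub_of_le a hj, sum_sub_distrib]
    ring
  obtain ⟨⟨j, hj, hQ⟩, hle⟩ := isGreatest_queueSet hbdd
  refine ⟨⟨j, by omega, by rw [increment_eq (by omega), ← hQ]⟩, ?_⟩
  rintro _ ⟨j, hj, rfl⟩
  rw [increment_eq hj]
  exact mul_le_mul_of_nonneg_left (hle ⟨j, by omega, rfl⟩) zero_le_two

theorem departure_height_profile_formula_general (a s : ℤ → ℤ)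
    (hbdd : ∀ i : ℤ, BddAbove (queueSet a s i)) :
    ∀ x : ℤ,
      BddAbove {y : ℤ | ∃ j : ℤ, 0 ≤ j ∧ y = heightProfile s j - heightProfile a j} ∧
      BddAbove {y : ℤ | ∃ j : ℤ, x ≤ j ∧
        y = heightProfile s j - heightProfile s x - (heightProfile a j - heightProfile a x)} ∧
      heightProfile (departure a s) x
        = heightProfile a x
          + sSup {y : ℤ | ∃ j : ℤ, 0 ≤ j ∧ y = heightProfile s j - heightProfile a j}
          - sSup {y : ℤ | ∃ j : ℤ, x ≤ j ∧
              y = heightProfile s j - heightProfile s x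
                - (heightProfile a j - heightProfile a x)} := by
  intro x
  have hzero := isGreatest_heightProfile_increment (a := a) (s := s) (x := 0) (hbdd _)
  simp only [heightProfile_zero, sub_zero, zero_add] at hzero
  have hx := isGreatest_heightProfile_increment (x := x) (hbdd _)
  refine ⟨hzero.bddAbove, hx.bddAbove, ?_⟩
  rw [hzero.csSup_eq, hx.csSup_eq, heightProfile_departure]
  ring

/-- Lemma 5.3 of the paper: the height profile of the departure process is given
by a variational formula in terms of the height profiles of the arrival and
service processes. -/
theorem departure_height_profile_formula (a s : ℤ → ℤ)
    (hval : ∀ k : ℤ, (a k = 0 ∨ a k = 1) ∧ (s k = 0 ∨ s k = 1))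
    (hbdd : ∀ i : ℤ, BddAbove (queueSet a s i)) :
    ∀ x : ℤ,
      BddAbove {y : ℤ | ∃ j : ℤ, 0 ≤ j ∧ y = heightProfile s j - heightProfile a j} ∧
      BddAbove {y : ℤ | ∃ j : ℤ, x ≤ j ∧
        y = heightProfile s j - heightProfile s x - (heightProfile a j - heightProfile a x)} ∧
      heightProfile (departure a s) x
        = heightProfile a x
          + sSup {y : ℤ | ∃ j : ℤ, 0 ≤ j ∧ y = heightProfile s j - heightProfile a j}
          - sSup {y : ℤ | ∃ j : ℤ, x ≤ j ∧
              y = heightProfile s j - heightProfile s x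
                - (heightProfile a j - heightProfile a x)} :=
  departure_height_profile_formula_general a s hbdd
end

section
/- Fix ρ1 ∈ (0,1) and ρ2 ∈ (0,1−ρ1). On a probability space, let (a(k))_{k∈ℤ} and (s(k))_{k∈ℤ} be a mutually independent family of {0,1}-valued random variables with P(a(k)=1) = ρ1 and P(s(k)=1) = ρ1+ρ2 for all k. Then for all integers j ≤ i: P( for all n < j, ∑_{k=n}^{i} a(k) ≥ ∑_{k=n}^{j} s(k) ) = 0. -/
/-!
On the event, for every `n < j` the services in `[n, j]` are covered by the arrivals in
`[n, i]`, of which at most `i - j + 1` lie in `[j, i]`; hence the partial sums of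
`s k - a k` over `k = j - 1, j - 2, …, n` stay below `i - j + 1`. These increments are
i.i.d. with mean `ρ2 > 0`, so by the strong law of large numbers their partial sums grow
linearly almost surely.
-/

open MeasureTheory ProbabilityTheory Filter Topology Finset

lemma eq_indicator_one_of_zero_or_one {Ω : Type*} {f : Ω → ℝ} (hf : ∀ ω, f ω = 0 ∨ f ω = 1) :
    f = {ω | f ω = 1}.indicator 1 := by
  funext ω
  rcases hf ω with h | h <;> simp [h]

section ZeroOneValued

variable {Ω Ω' : Type*} [MeasurableSpace Ω] [MeasurableSpace Ω'] {μ : Measure Ω}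
  {ν : Measure Ω'} {f : Ω → ℝ} {g : Ω' → ℝ}

lemma map_eq_of_zero_or_one (hfm : Measurable f) (hf : ∀ ω, f ω = 0 ∨ f ω = 1) :
    μ.map f = μ {ω | f ω = 1}ᶜ • Measure.dirac 0 + μ {ω | f ω = 1} • Measure.dirac 1 := by
  ext t ht
  have hpreimage : f ⁻¹' t =
      {ω | f ω = 1}ᶜ ∩ {_ω | (0 : ℝ) ∈ t} ∪ {ω | f ω = 1} ∩ {_ω | (1 : ℝ) ∈ t} := by
    ext ω
    rcases hf ω with h | h <;> simp [h]
  have hm : MeasurableSet {ω | f ω = 1} := hfm (measurableSet_singleton 1)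
  rw [Measure.map_apply hfm ht, hpreimage]
  by_cases h0 : (0 : ℝ) ∈ t <;> by_cases h1 : (1 : ℝ) ∈ t <;>
    simp [h0, h1, Measure.dirac_apply' _ ht, add_comm, measure_add_measure_compl hm]

lemma identDistrib_of_zero_or_one [IsProbabilityMeasure μ] [IsProbabilityMeasure ν]
    (hfm : Measurable f) (hgm : Measurable g) (hf : ∀ ω, f ω = 0 ∨ f ω = 1)
    (hg : ∀ ω, g ω = 0 ∨ g ω = 1) (h : μ {ω | f ω = 1} = ν {ω | g ω = 1}) :
    IdentDistrib f g μ ν where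
  aemeasurable_fst := hfm.aemeasurable
  aemeasurable_snd := hgm.aemeasurable
  map_eq := by
    have hmf : MeasurableSet {ω | f ω = 1} := hfm (measurableSet_singleton 1)
    have hmg : MeasurableSet {ω | g ω = 1} := hgm (measurableSet_singleton 1)
    rw [map_eq_of_zero_or_one hfm hf, map_eq_of_zero_or_one hgm hg,
      prob_compl_eq_one_sub hmf, prob_compl_eq_one_sub hmg, h]

lemma integrable_of_zero_or_one [IsFiniteMeasure μ] (hfm : Measurable f)
    (hf : ∀ ω, f ω = 0 ∨ f ω = 1) : Integrable f μ := by
  rw [eq_indicator_one_of_zero_or_one hf]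
  exact (integrable_const 1).indicator (hfm (measurableSet_singleton 1))

lemma integral_of_zero_or_one (hfm : Measurable f) (hf : ∀ ω, f ω = 0 ∨ f ω = 1) :
    ∫ ω, f ω ∂μ = μ.real {ω | f ω = 1} := by
  conv_lhs => rw [eq_indicator_one_of_zero_or_one hf]
  exact integral_indicator_one (hfm (measurableSet_singleton 1))

lemma ae_tendsto_average_sub_of_zero_or_one {ι : Type*} [IsProbabilityMeasure μ]
    {a s : ι → Ω → ℝ} {p q : ℝ} (hp : 0 ≤ p) (hq : 0 ≤ q)
    (hma : ∀ k, Measurable (a k)) (hms : ∀ k, Measurable (s k))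
    (hva : ∀ k ω, a k ω = 0 ∨ a k ω = 1) (hvs : ∀ k ω, s k ω = 0 ∨ s k ω = 1)
    (hindep : iIndepFun (Sum.elim a s) μ)
    (hpa : ∀ k, μ {ω | a k ω = 1} = ENNReal.ofReal p)
    (hps : ∀ k, μ {ω | s k ω = 1} = ENNReal.ofReal q) {e : ℕ → ι} (he : e.Injective) :
    ∀ᵐ ω ∂μ, Tendsto (fun n : ℕ => (n : ℝ)⁻¹ • ∑ m ∈ range n, (s (e m) ω - a (e m) ω))
      atTop (𝓝 (q - p)) := by
  have hmeas : ∀ c, Measurable (Sum.elim a s c) := by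
    rintro (k | k)
    exacts [hma k, hms k]
  have hpair_indep : ∀ k, IndepFun (a k) (s k) μ := fun k =>
    hindep.indepFun (show (Sum.inl k : ι ⊕ ι) ≠ Sum.inr k from Sum.inl_ne_inr)
  have hpair_ident : ∀ k k', IdentDistrib (fun ω => (a k ω, s k ω))
      (fun ω => (a k' ω, s k' ω)) μ μ := fun k k' =>
    (identDistrib_of_zero_or_one (hma k) (hma k') (hva k) (hva k') (by rw [hpa, hpa])).prodMk
      (identDistrib_of_zero_or_one (hms k) (hms k') (hvs k) (hvs k') (by rw [hps, hps]))
      (hpair_indep k) (hpair_indep k')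
  have hX_indep : Pairwise (Function.onFun (IndepFun · · μ)
      fun m ω => s (e m) ω - a (e m) ω) := fun m m' hmm' =>
    (hindep.indepFun_prodMk_prodMk hmeas (.inl _) (.inr _) (.inl _) (.inr _)
      (by simpa using he.ne hmm') Sum.inl_ne_inr Sum.inr_ne_inl (by simpa using he.ne hmm')).comp
      (measurable_snd.sub measurable_fst) (measurable_snd.sub measurable_fst)
  have hs_int := integrable_of_zero_or_one (μ := μ) (hms (e 0)) (hvs (e 0))
  have ha_int := integrable_of_zero_or_one (μ := μ) (hma (e 0)) (hva (e 0))
  have hmean : ∫ ω, (s (e 0) ω - a (e 0) ω) ∂μ = q - p := by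
    rw [integral_sub hs_int ha_int, integral_of_zero_or_one (hms _) (hvs _),
      integral_of_zero_or_one (hma _) (hva _), measureReal_def, measureReal_def, hps, hpa,
      ENNReal.toReal_ofReal hq, ENNReal.toReal_ofReal hp]
  simpa only [hmean] using strong_law_ae _ (hs_int.sub ha_int) hX_indep
    fun m => (hpair_ident _ _).comp (measurable_snd.sub measurable_fst)

end ZeroOneValued

lemma sum_range_comp_sub_eq_sum_Ico (f : ℤ → ℝ) (j : ℤ) (n : ℕ) :
    ∑ m ∈ range n, f (j - 1 - m) = ∑ k ∈ Ico (j - n) j, f k := by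
  refine sum_nbij' (fun m => j - 1 - m) (fun k => (j - 1 - k).toNat) ?_ ?_ ?_ ?_ ?_ <;>
    intros <;> simp_all <;> omega

lemma sum_Ico_sub_le_of_forall_sum_Icc_le {a s : ℤ → ℝ} {i j : ℤ} (hs : ∀ k, 0 ≤ s k)
    (ha : ∀ k, a k ≤ 1) (hji : j ≤ i)
    (h : ∀ n < j, ∑ k ∈ Icc n j, s k ≤ ∑ k ∈ Icc n i, a k) {n : ℤ} (hn : n ≤ j) :
    ∑ k ∈ Ico n j, (s k - a k) ≤ i - j + 1 := by
  rcases hn.eq_or_lt with rfl | hn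
  · simp only [Ico_self, sum_empty]
    linarith [(Int.cast_le (R := ℝ)).2 hji]
  have hs_le : ∑ k ∈ Ico n j, s k ≤ ∑ k ∈ Icc n j, s k :=
    sum_le_sum_of_subset_of_nonneg Ico_subset_Icc_self fun k _ _ => hs k
  have ha_split : ∑ k ∈ Icc n i, a k = ∑ k ∈ Ico n j, a k + ∑ k ∈ Icc j i, a k := by
    rw [← sum_union (disjoint_left.2 fun k hk hk' => by
      simp only [mem_Ico, mem_Icc] at hk hk'; omega)]
    congr 1
    ext k
    simp only [mem_union, mem_Ico, mem_Icc]
    omega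
  have ha_le : ∑ k ∈ Icc j i, a k ≤ i - j + 1 := by
    calc ∑ k ∈ Icc j i, a k ≤ #(Icc j i) • (1 : ℝ) := sum_le_card_nsmul _ _ _ fun k _ => ha k
      _ = i - j + 1 := by
        rw [Int.card_Icc, nsmul_one, ← Int.cast_natCast, Int.toNat_of_nonneg (by omega)]
        push_cast
        ring
  rw [sum_sub_distrib]
  linarith [h n hn]

lemma nonpos_of_tendsto_average_of_sum_le {u : ℕ → ℝ} {L C : ℝ}
    (hu : Tendsto (fun n : ℕ => (n : ℝ)⁻¹ • ∑ m ∈ range n, u m) atTop (𝓝 L))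
    (hC : ∀ n, ∑ m ∈ range n, u m ≤ C) : L ≤ 0 :=
  le_of_tendsto_of_tendsto hu (tendsto_const_div_atTop_nhds_zero_nat C) <|
    Eventually.of_forall fun n => by
      dsimp only
      rw [smul_eq_mul, div_eq_inv_mul]
      exact mul_le_mul_of_nonneg_left (hC n) (by positivity)

/-- In the queueing construction of the stationary measure of the two-species TASEP
with independent Bernoulli arrival (rate ρ1) and service (rate ρ1+ρ2) processes, for
all j ≤ i, the event that the arrival at i is matched to the service at j with all
earlier services to the left already used has probability zero. -/
theorem matching_event_null
    {Ω : Type*} [MeasureSpace Ω] [IsProbabilityMeasure (volume : Measure Ω)]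
    (ρ1 ρ2 : ℝ) (h1 : ρ1 ∈ Set.Ioo (0:ℝ) 1) (h2 : ρ2 ∈ Set.Ioo (0:ℝ) (1 - ρ1))
    (a s : ℤ → Ω → ℝ)
    (hma : ∀ k, Measurable (a k)) (hms : ∀ k, Measurable (s k))
    (hva : ∀ k ω, a k ω = 0 ∨ a k ω = 1) (hvs : ∀ k ω, s k ω = 0 ∨ s k ω = 1)
    (hindep : iIndepFun (m := fun _ : ℤ ⊕ ℤ => (inferInstance : MeasurableSpace ℝ))
      (Sum.elim a s) volume)
    (hpa : ∀ k, volume {ω | a k ω = 1} = ENNReal.ofReal ρ1)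
    (hps : ∀ k, volume {ω | s k ω = 1} = ENNReal.ofReal (ρ1 + ρ2)) :
    ∀ i j : ℤ, j ≤ i →
      volume {ω | ∀ n : ℤ, n < j →
        ∑ k ∈ Finset.Icc n j, s k ω ≤ ∑ k ∈ Finset.Icc n i, a k ω} = 0 := by
  intro i j hji
  have hslln := ae_tendsto_average_sub_of_zero_or_one h1.1.le (by linarith [h1.1, h2.1])
    hma hms hva hvs hindep hpa hps (e := fun m : ℕ => j - 1 - m) fun m m' h => by simpa using h
  rw [add_sub_cancel_left] at hslln
  refine measure_mono_null (fun ω hω => ?_) (ae_iff.1 hslln)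
  intro hlim
  have h01 : ∀ x : ℝ, x = 0 ∨ x = 1 → 0 ≤ x ∧ x ≤ 1 := by rintro x (rfl | rfl) <;> norm_num
  refine h2.1.not_ge (nonpos_of_tendsto_average_of_sum_le (C := i - j + 1) hlim fun n => ?_)
  rw [sum_range_comp_sub_eq_sum_Ico (fun k => s k ω - a k ω)]
  exact sum_Ico_sub_le_of_forall_sum_Icc_le (fun k => (h01 _ (hvs k ω)).1)
    (fun k => (h01 _ (hva k ω)).2) hji hω (by omega)
end

section
/- Fix ρ1 ∈ (0,1) and ρ2 ∈ (0,1−ρ1). On a probability space, let (a(k))_{k∈ℤ} and (s(k))_{k∈ℤ} be a mutually independent family of {0,1}-valued random variables with P(a(k)=1) = ρ1 and P(s(k)=1) = ρ1+ρ2 for all k. Then there exist constants C, c > 0, depending only on ρ1 and ρ2, such that for every pair of integers u ≤ v with ℓ = v − u: P( there exists i with u ≤ i ≤ v such that site i carries a second class particle ) ≥ 1 − C·e^{−c·ℓ}. -/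
open MeasureTheory ProbabilityTheory

/-- Site i carries a second class particle in the queueing construction:
there is a service but no arrival at i, and the queue to the right of i is empty. -/
def SecondClassAt {Ω : Type*} (a s : ℤ → Ω → ℝ) (i : ℤ) (ω : Ω) : Prop :=
  s i ω = 1 ∧ a i ω = 0 ∧ ∀ j : ℤ, i + 1 ≤ j →
    ∑ k ∈ Finset.Icc (i + 1) j, a k ω ≤ ∑ k ∈ Finset.Icc (i + 1) j, s k ω

/-!
Read `a k - s k` as the steps of a walk started at `u - 1`. If the walk stays strictly
below its starting level at every time `j ≥ v`, then the last time in `[u - 1, v - 1]` at which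
it attains its maximum over that window is followed by a down-step at some `i ∈ [u, v]`, after
which the walk never climbs back above its value at `i`: site `i` carries a second class
particle. So the complementary event is covered by the events `S_[u,j] ≤ A_[u,j]`, `j ≥ v`,
each of which has probability at most `exp (-ρ2 ^ 2 (j - u + 1))` by Hoeffding's inequality
(the steps have mean `-ρ2`); summing the geometric series gives the bound with
`c = ρ2 ^ 2` and `C = (1 - exp (-ρ2 ^ 2))⁻¹`.
-/

open Finset Real

theorem Finset.sum_Ioc_add_sum_Ioc {α M : Type*} [LinearOrder α] [LocallyFiniteOrder α]
    [AddCommMonoid M] (f : α → M) {a b c : α} (hab : a ≤ b) (hbc : b ≤ c) :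
    ∑ k ∈ Ioc a b, f k + ∑ k ∈ Ioc b c, f k = ∑ k ∈ Ioc a c, f k := by
  rw [← sum_union (Ioc_disjoint_Ioc_of_le le_rfl), Ioc_union_Ioc_eq_Ioc hab hbc]

theorem exists_forall_gt_apply_lt {β : Type*} [LinearOrder β] (T : ℤ → β) {m n : ℤ} (hmn : m ≤ n)
    (hT : ∀ j, n < j → T j < T m) :
    ∃ i, m ≤ i ∧ i ≤ n ∧ ∀ j, i < j → T j < T i := by
  -- the lexicographic maximiser of `(T i, i)` is the last maximiser of `T` on `[m, n]`
  obtain ⟨i, hi, hmax⟩ :=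
    (Icc m n).exists_max_image (fun i => toLex (T i, i)) (nonempty_Icc.2 hmn)
  have hle : ∀ j ∈ Icc m n, T j < T i ∨ T j = T i ∧ j ≤ i := fun j hj =>
    Prod.Lex.le_iff.1 (hmax j hj)
  obtain ⟨hmi, hin⟩ := mem_Icc.1 hi
  refine ⟨i, hmi, hin, fun j hij => ?_⟩
  by_cases hjn : j ≤ n
  · rcases hle j (mem_Icc.2 ⟨by omega, hjn⟩) with h | h
    · exact h
    · omega
  · calc T j < T m := hT j (by omega)
      _ ≤ T i := by
        rcases hle m (left_mem_Icc.2 hmn) with h | h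
        exacts [h.le, h.1.le]

theorem exists_eq_neg_one_and_sum_Ioc_nonpos (g : ℤ → ℤ) (hg : ∀ k, -1 ≤ g k) {m n : ℤ}
    (hmn : m ≤ n) (H : ∀ j, n < j → ∑ k ∈ Ioc m j, g k < 0) :
    ∃ i, m < i ∧ i ≤ n + 1 ∧ g i = -1 ∧ ∀ j, i ≤ j → ∑ k ∈ Ioc i j, g k ≤ 0 := by
  set T : ℤ → ℤ := fun j => ∑ k ∈ Ioc m j, g k
  have hTm : T m = 0 := by simp [T]
  obtain ⟨i, hmi, hin, hi⟩ := exists_forall_gt_apply_lt T hmn fun j hj => hTm ▸ H j hj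
  have hsplit : ∀ p j, i ≤ p → p ≤ j → T j = T p + ∑ k ∈ Ioc p j, g k := fun p j hp hpj =>
    (sum_Ioc_add_sum_Ioc g (hmi.trans hp) hpj).symm
  have hstep : T (i + 1) = T i + g (i + 1) := by
    rw [hsplit i (i + 1) le_rfl (by omega), ← Icc_add_one_left_eq_Ioc, Icc_self, sum_singleton]
  have hgi : g (i + 1) = -1 := by
    have := hi (i + 1) (by omega)
    have := hg (i + 1)
    omega
  refine ⟨i + 1, by omega, by omega, hgi, fun j hj => ?_⟩
  have h1 := hsplit (i + 1) j (by omega) hj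
  have h2 := hi j (by omega)
  omega

theorem exists_secondClassAt_of_forall_sum_lt {Ω : Type*} {a s : ℤ → Ω → ℝ} {ω : Ω}
    (hva : ∀ k, a k ω = 0 ∨ a k ω = 1) (hvs : ∀ k, s k ω = 0 ∨ s k ω = 1) {u v : ℤ}
    (huv : u ≤ v) (H : ∀ j, v ≤ j → ∑ k ∈ Icc u j, a k ω < ∑ k ∈ Icc u j, s k ω) :
    ∃ i, u ≤ i ∧ i ≤ v ∧ SecondClassAt a s i ω := by
  have hbound : ∀ k, (0 ≤ a k ω ∧ a k ω ≤ 1) ∧ (0 ≤ s k ω ∧ s k ω ≤ 1) := fun k => by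
    rcases hva k with h | h <;> rcases hvs k with h' | h' <;> norm_num [h, h']
  have hfloor : ∀ x : ℝ, x = 0 ∨ x = 1 → ((⌊x⌋ : ℤ) : ℝ) = x := by
    rintro x (rfl | rfl) <;> simp
  -- an integer-valued walk, so that a strict drop is a drop by at least one
  set g : ℤ → ℤ := fun k => ⌊a k ω⌋ - ⌊s k ω⌋
  have hcast : ∀ k, (g k : ℝ) = a k ω - s k ω := fun k => by
    push_cast [g, hfloor _ (hva k), hfloor _ (hvs k)]
    rfl
  have hsum : ∀ I : Finset ℤ, ((∑ k ∈ I, g k : ℤ) : ℝ) = ∑ k ∈ I, a k ω - ∑ k ∈ I, s k ω :=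
    fun I => by push_cast [hcast]; exact sum_sub_distrib _ _
  have hg : ∀ k, -1 ≤ g k := fun k => by
    have : ((-1 : ℤ) : ℝ) ≤ g k := by rw [hcast]; push_cast; linarith [hbound k]
    exact_mod_cast this
  have hIcc : ∀ j, Icc u j = Ioc (u - 1) j := fun j => by
    rw [← Icc_add_one_left_eq_Ioc, sub_add_cancel]
  obtain ⟨i, hui, hiv, hgi, htail⟩ :=
    exists_eq_neg_one_and_sum_Ioc_nonpos g hg (by omega : u - 1 ≤ v - 1) fun j hj => by
      have : ((∑ k ∈ Ioc (u - 1) j, g k : ℤ) : ℝ) < 0 := by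
        rw [hsum, ← hIcc]; linarith [H j (by omega)]
      exact_mod_cast this
  have hgi' : a i ω - s i ω = -1 := by rw [← hcast, hgi]; norm_num
  refine ⟨i, by omega, by omega, by linarith [hbound i], by linarith [hbound i], fun j hj => ?_⟩
  have : ((∑ k ∈ Ioc i j, g k : ℤ) : ℝ) ≤ 0 := by exact_mod_cast htail j (by omega)
  rw [hsum, ← Icc_add_one_left_eq_Ioc] at this
  linarith

theorem integral_eq_of_eq_zero_or_eq_one {Ω : Type*} [MeasurableSpace Ω] {μ : Measure Ω}
    {X : Ω → ℝ} (hX : Measurable X) (hv : ∀ ω, X ω = 0 ∨ X ω = 1) {p : ℝ} (hp : 0 ≤ p)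
    (hP : μ {ω | X ω = 1} = ENNReal.ofReal p) : μ[X] = p := by
  have hind : X = Set.indicator {ω | X ω = 1} 1 := by
    funext ω
    rcases hv ω with h | h <;> simp [h]
  rw [hind, integral_indicator_one (s := {ω | X ω = 1}) (hX (measurableSet_singleton 1)),
    measureReal_def, hP, ENNReal.toReal_ofReal hp]

theorem measure_sum_le_sum_le_exp {Ω ι : Type*} [MeasurableSpace Ω] {μ : Measure Ω}
    {a s : ι → Ω → ℝ} {p q : ℝ} (hpq : p ≤ q)
    (hma : ∀ k, AEMeasurable (a k) μ) (hms : ∀ k, AEMeasurable (s k) μ)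
    (ha : ∀ k, ∀ᵐ ω ∂μ, a k ω ∈ Set.Icc 0 1) (hs : ∀ k, ∀ᵐ ω ∂μ, s k ω ∈ Set.Icc 0 1)
    (hindep : iIndepFun (Sum.elim a s) μ) (hpa : ∀ k, μ[a k] = p) (hqs : ∀ k, μ[s k] = q)
    (F : Finset ι) :
    μ {ω | ∑ k ∈ F, s k ω ≤ ∑ k ∈ F, a k ω} ≤ ENNReal.ofReal (exp (-(q - p) ^ 2 * #F)) := by
  have := hindep.isProbabilityMeasure
  -- Hoeffding's inequality for the centred variables `a k - p` and `q - s k`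
  set Z : ι ⊕ ι → Ω → ℝ := Sum.elim (fun k ω => a k ω - p) (fun k ω => q - s k ω)
  have hZ : iIndepFun Z μ := by
    convert hindep.comp (Sum.elim (fun _ x => x - p) (fun _ x => q - x)) (by
      rintro (k | k)
      exacts [measurable_id.sub_const p, measurable_const.sub measurable_id]) using 1
    funext m ω
    cases m <;> rfl
  have hc : (‖(1 : ℝ) - 0‖₊ / 2) ^ 2 = (4⁻¹ : NNReal) := by norm_num
  have hsubG : ∀ m ∈ F.disjSum F, HasSubgaussianMGF (Z m) 4⁻¹ μ := by
    rintro (k | k) - <;> rw [← hc]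
    · simpa [Z, hpa] using hasSubgaussianMGF_of_mem_Icc (hma k) (ha k)
    · refine (hasSubgaussianMGF_of_mem_Icc (hms k) (hs k)).neg.congr (ae_of_all _ fun ω => ?_)
      simp [Z, hqs]
  have hevent : {ω | ∑ k ∈ F, s k ω ≤ ∑ k ∈ F, a k ω}
      = {ω | #F * (q - p) ≤ ∑ m ∈ F.disjSum F, Z m ω} := by
    ext ω
    simp only [Set.mem_ofPred_eq, sum_disjSum, Z, Sum.elim_inl, Sum.elim_inr, sum_sub_distrib,
      sum_const, nsmul_eq_mul]
    constructor <;> intro h <;> linarith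
  have hexp : -(#F * (q - p)) ^ 2 / (2 * ((∑ _m ∈ F.disjSum F, (4⁻¹ : NNReal) : NNReal) : ℝ))
      = -(q - p) ^ 2 * #F := by
    simp only [sum_const, card_disjSum, nsmul_eq_mul, NNReal.coe_mul, NNReal.coe_natCast,
      NNReal.coe_inv]
    rcases eq_or_ne (#F : ℝ) 0 with h | h
    · simp [h]
    · push_cast
      field_simp
      ring
  rw [hevent, ENNReal.le_ofReal_iff_toReal_le (measure_ne_top _ _) (exp_pos _).le, ← hexp]
  exact HasSubgaussianMGF.measure_sum_ge_le_of_iIndepFun hZ hsubG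
    (mul_nonneg (Nat.cast_nonneg _) (sub_nonneg.2 hpq))

theorem sub_add_le_card_Icc (u v : ℤ) (m : ℕ) : ((v - u : ℤ) : ℝ) + m ≤ #(Icc u (v + m)) := by
  exact_mod_cast (show v - u + m ≤ (#(Icc u (v + m)) : ℤ) by rw [Int.card_Icc]; omega)

theorem measure_iUnion_le_of_le_exp {Ω : Type*} [MeasurableSpace Ω] {μ : Measure Ω}
    {E : ℕ → Set Ω} {c ℓ : ℝ} (hc : 0 < c)
    (hE : ∀ m : ℕ, μ (E m) ≤ ENNReal.ofReal (exp (-c * (ℓ + m)))) :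
    μ (⋃ m, E m) ≤ ENNReal.ofReal ((1 - exp (-c))⁻¹ * exp (-c * ℓ)) := by
  have hgeom : ∀ m : ℕ, exp (-c * (ℓ + m)) = exp (-c * ℓ) * exp (-c) ^ m := fun m => by
    rw [← exp_nat_mul, ← exp_add]
    ring_nf
  have hr : exp (-c) < 1 := exp_lt_one_iff.2 (neg_lt_zero.2 hc)
  calc μ (⋃ m, E m) ≤ ∑' m, μ (E m) := measure_iUnion_le _
    _ ≤ ∑' m : ℕ, ENNReal.ofReal (exp (-c * ℓ) * exp (-c) ^ m) :=
        ENNReal.tsum_le_tsum fun m => (hE m).trans_eq (by rw [hgeom])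
    _ = ENNReal.ofReal (∑' m : ℕ, exp (-c * ℓ) * exp (-c) ^ m) :=
        (ENNReal.ofReal_tsum_of_nonneg (fun m => by positivity)
          ((summable_geometric_of_lt_one (exp_pos _).le hr).mul_left _)).symm
    _ = ENNReal.ofReal ((1 - exp (-c))⁻¹ * exp (-c * ℓ)) := by
        rw [tsum_mul_left, tsum_geometric_of_lt_one (exp_pos _).le hr, mul_comm]

theorem second_class_particle_in_interval_general
    {Ω : Type*} [MeasureSpace Ω]
    (ρ1 ρ2 : ℝ) (h1 : ρ1 ∈ Set.Ioo (0:ℝ) 1) (h2 : ρ2 ∈ Set.Ioo (0:ℝ) (1 - ρ1))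
    (a s : ℤ → Ω → ℝ)
    (hma : ∀ k, Measurable (a k)) (hms : ∀ k, Measurable (s k))
    (hva : ∀ k ω, a k ω = 0 ∨ a k ω = 1) (hvs : ∀ k ω, s k ω = 0 ∨ s k ω = 1)
    (hindep : iIndepFun
      (Sum.elim a s) volume)
    (hpa : ∀ k, volume {ω | a k ω = 1} = ENNReal.ofReal ρ1)
    (hps : ∀ k, volume {ω | s k ω = 1} = ENNReal.ofReal (ρ1 + ρ2)) :
    ∃ C > (0:ℝ), ∃ c > (0:ℝ), ∀ u v : ℤ, u ≤ v →
      1 - ENNReal.ofReal (C * Real.exp (-c * ((v - u : ℤ) : ℝ)))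
        ≤ volume {ω | ∃ i : ℤ, u ≤ i ∧ i ≤ v ∧ SecondClassAt a s i ω} := by
  obtain ⟨hρ1, -⟩ := h1
  obtain ⟨hρ2, -⟩ := h2
  have := hindep.isProbabilityMeasure
  have hunit : ∀ x : ℝ, x = 0 ∨ x = 1 → x ∈ Set.Icc 0 1 := by rintro x (rfl | rfl) <;> simp
  have hsum_le (F : Finset ℤ) : volume {ω | ∑ k ∈ F, s k ω ≤ ∑ k ∈ F, a k ω}
      ≤ ENNReal.ofReal (exp (-ρ2 ^ 2 * #F)) := by
    simpa only [add_sub_cancel_left] using measure_sum_le_sum_le_exp (by linarith)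
      (fun k => (hma k).aemeasurable) (fun k => (hms k).aemeasurable)
      (fun k => ae_of_all _ fun ω => hunit _ (hva k ω))
      (fun k => ae_of_all _ fun ω => hunit _ (hvs k ω)) hindep
      (fun k => integral_eq_of_eq_zero_or_eq_one (hma k) (hva k) hρ1.le (hpa k))
      (fun k => integral_eq_of_eq_zero_or_eq_one (hms k) (hvs k) (by linarith) (hps k)) F
  have hc : 0 < ρ2 ^ 2 := by positivity
  refine ⟨(1 - exp (-ρ2 ^ 2))⁻¹, inv_pos.2 (sub_pos.2 (exp_lt_one_iff.2 (neg_lt_zero.2 hc))),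
    ρ2 ^ 2, hc, fun u v huv => ?_⟩
  set bad := ⋃ m : ℕ, {ω | ∑ k ∈ Icc u (v + m), s k ω ≤ ∑ k ∈ Icc u (v + m), a k ω}
  have hbad : volume bad
      ≤ ENNReal.ofReal ((1 - exp (-ρ2 ^ 2))⁻¹ * exp (-ρ2 ^ 2 * (v - u : ℤ))) :=
    measure_iUnion_le_of_le_exp hc fun m => (hsum_le _).trans <| ENNReal.ofReal_le_ofReal <|
      exp_le_exp.2 <| mul_le_mul_of_nonpos_left (sub_add_le_card_Icc u v m) (by linarith)
  have hgood : badᶜ ⊆ {ω | ∃ i : ℤ, u ≤ i ∧ i ≤ v ∧ SecondClassAt a s i ω} := fun ω hω => by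
    simp only [bad, Set.mem_compl_iff, Set.mem_iUnion, Set.mem_ofPred_eq, not_exists,
      not_le] at hω
    refine exists_secondClassAt_of_forall_sum_lt (hva · ω) (hvs · ω) huv fun j hj => ?_
    obtain ⟨m, rfl⟩ := Int.le.dest hj
    exact hω m
  calc 1 - ENNReal.ofReal ((1 - exp (-ρ2 ^ 2))⁻¹ * exp (-ρ2 ^ 2 * (v - u : ℤ)))
      ≤ 1 - volume bad := tsub_le_tsub_left hbad 1
    _ = volume badᶜ := (prob_compl_eq_one_sub (by measurability)).symm
    _ ≤ _ := measure_mono hgood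

/-- In every interval [u,v] of length ℓ = v−u there is a second class particle
with probability at least 1 − C e^{−cℓ}. -/
theorem second_class_particle_in_interval
    {Ω : Type*} [MeasureSpace Ω] [IsProbabilityMeasure (volume : Measure Ω)]
    (ρ1 ρ2 : ℝ) (h1 : ρ1 ∈ Set.Ioo (0:ℝ) 1) (h2 : ρ2 ∈ Set.Ioo (0:ℝ) (1 - ρ1))
    (a s : ℤ → Ω → ℝ)
    (hma : ∀ k, Measurable (a k)) (hms : ∀ k, Measurable (s k))
    (hva : ∀ k ω, a k ω = 0 ∨ a k ω = 1) (hvs : ∀ k ω, s k ω = 0 ∨ s k ω = 1)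
    (hindep : iIndepFun
      (Sum.elim a s) volume)
    (hpa : ∀ k, volume {ω | a k ω = 1} = ENNReal.ofReal ρ1)
    (hps : ∀ k, volume {ω | s k ω = 1} = ENNReal.ofReal (ρ1 + ρ2)) :
    ∃ C > (0:ℝ), ∃ c > (0:ℝ), ∀ u v : ℤ, u ≤ v →
      1 - ENNReal.ofReal (C * Real.exp (-c * ((v - u : ℤ) : ℝ)))
        ≤ volume {ω | ∃ i : ℤ, u ≤ i ∧ i ≤ v ∧ SecondClassAt a s i ω} :=
  second_class_particle_in_interval_general ρ1 ρ2 h1 h2 a s hma hms hva hvs hindep hpa hps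
end

section
/- Fix ρ1 ∈ (0,1) and ρ2 ∈ (0,1−ρ1). On a probability space, let (a(k))_{k∈ℤ} and (s(k))_{k∈ℤ} be a mutually independent family of {0,1}-valued random variables with P(a(k)=1) = ρ1 and P(s(k)=1) = ρ1+ρ2 for all k. Fix z ∈ ℤ and let S be the event that site z carries a second class particle. Then, conditionally on S, the configuration to the left of z is independent of the configuration to the right of z: for every event E determined by the family (η(i))_{i<z} and every event F determined by the family (η(i))_{i>z}, one has P(E ∩ F ∩ S)·P(S) = P(E ∩ S)·P(F ∩ S). -/
open MeasureTheory ProbabilityTheory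

/-- Site i carries a first class particle in the queueing construction. -/
def FirstClassAt {Ω : Type*} (a s : ℤ → Ω → ℝ) (i : ℤ) (ω : Ω) : Prop :=
  s i ω = 1 ∧ (a i ω = 1 ∨ ∃ j : ℤ, i + 1 ≤ j ∧
    ∑ k ∈ Finset.Icc (i + 1) j, s k ω < ∑ k ∈ Finset.Icc (i + 1) j, a k ω)

open Classical in
/-- The particle configuration built from the queueing construction:
2 = second class particle, 1 = first class particle, 0 = hole. -/
noncomputable def etaConf {Ω : Type*} (a s : ℤ → Ω → ℝ) (i : ℤ) (ω : Ω) : ℕ :=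
  if SecondClassAt a s i ω then 2 else if FirstClassAt a s i ω then 1 else 0

/-
Given a second class particle at `z`, the queue at `z + 1` is empty: `A_{[z+1,j]} ≤ S_{[z+1,j]}`
for all `j`. For `i < z` this makes the constraints `j > z` in the definition of `η(i)`
consequences of the one at `j = z`, so on this event `η(i)` coincides with the configuration of
the fields truncated after `z` (with `a(z) = 0`, `s(z) = 1`), which depends only on the sites
`< z`. The event itself and `η(i)` for `i > z` depend only on the sites `≥ z`. Hence, on the
event, every left event agrees with an event of the sites `< z`, and independence of the two
blocks of sites gives the product formula.
-/

open Finset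

lemma sum_Icc_eq_sum_Icc_add_sum_Icc {M : Type*} [AddCommMonoid M] (f : ℤ → M) {p m q : ℤ}
    (hpm : p ≤ m + 1) (hmq : m ≤ q) :
    ∑ k ∈ Icc p q, f k = ∑ k ∈ Icc p m, f k + ∑ k ∈ Icc (m + 1) q, f k := by
  rw [← sum_union (disjoint_left.2 fun k hk hk' => by simp at hk hk'; omega)]
  congr 1
  ext k
  simp only [mem_union, mem_Icc]
  omega

section Queue

variable {Ω : Type*} {a s a' s' : ℤ → Ω → ℝ} {i z : ℤ} {ω : Ω}

/-- The queue length `Q(i)` vanishes. -/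
def QueueEmptyAt (a s : ℤ → Ω → ℝ) (i : ℤ) (ω : Ω) : Prop :=
  ∀ j : ℤ, i ≤ j → ∑ k ∈ Icc i j, a k ω ≤ ∑ k ∈ Icc i j, s k ω

lemma secondClassAt_iff :
    SecondClassAt a s i ω ↔ s i ω = 1 ∧ a i ω = 0 ∧ QueueEmptyAt a s (i + 1) ω :=
  Iff.rfl

lemma firstClassAt_iff :
    FirstClassAt a s i ω ↔ s i ω = 1 ∧ (a i ω = 1 ∨ ¬ QueueEmptyAt a s (i + 1) ω) := by
  simp only [FirstClassAt, QueueEmptyAt, not_forall, not_le, exists_prop]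

lemma queueEmptyAt_iff_of_queueEmptyAt (hz : QueueEmptyAt a s (z + 1) ω) (hi : i ≤ z) :
    QueueEmptyAt a s i ω ↔
      ∀ j, i ≤ j → j ≤ z → ∑ k ∈ Icc i j, a k ω ≤ ∑ k ∈ Icc i j, s k ω := by
  refine ⟨fun h j hij _ => h j hij, fun h j hij => ?_⟩
  rcases le_or_gt j z with hjz | hzj
  · exact h j hij hjz
  · rw [sum_Icc_eq_sum_Icc_add_sum_Icc (fun k => a k ω) (by omega) hzj.le,
      sum_Icc_eq_sum_Icc_add_sum_Icc (fun k => s k ω) (by omega) hzj.le]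
    exact add_le_add (h z hi le_rfl) (hz j hzj)

lemma etaConf_eq_of_queueEmptyAt (hq : QueueEmptyAt a s (z + 1) ω)
    (hq' : QueueEmptyAt a' s' (z + 1) ω) (ha : ∀ k, i ≤ k → k ≤ z → a k ω = a' k ω)
    (hs : ∀ k, i ≤ k → k ≤ z → s k ω = s' k ω) (hi : i < z) :
    etaConf a s i ω = etaConf a' s' i ω := by
  have hQ : QueueEmptyAt a s (i + 1) ω ↔ QueueEmptyAt a' s' (i + 1) ω := by
    rw [queueEmptyAt_iff_of_queueEmptyAt hq hi, queueEmptyAt_iff_of_queueEmptyAt hq' hi]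
    refine forall₃_congr fun j hij hjz => ?_
    rw [sum_congr rfl fun k hk => ha k (by simp at hk; omega) (by simp at hk; omega),
      sum_congr rfl fun k hk => hs k (by simp at hk; omega) (by simp at hk; omega)]
  have hsi := hs i le_rfl hi.le
  have hai := ha i le_rfl hi.le
  have h2 : SecondClassAt a s i ω ↔ SecondClassAt a' s' i ω := by
    rw [secondClassAt_iff, secondClassAt_iff, hsi, hai, hQ]
  have h1 : FirstClassAt a s i ω ↔ FirstClassAt a' s' i ω := by
    rw [firstClassAt_iff, firstClassAt_iff, hsi, hai, hQ]
  classical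
  exact if_congr h2 rfl (if_congr h1 rfl rfl)

def truncateAt (f : ℤ → Ω → ℝ) (z : ℤ) (c : ℝ) : ℤ → Ω → ℝ :=
  fun k ω => if k < z then f k ω else if k = z then c else 0

lemma queueEmptyAt_truncateAt (c d : ℝ) :
    QueueEmptyAt (truncateAt a z c) (truncateAt s z d) (z + 1) ω := by
  intro j _
  rw [sum_eq_zero fun k hk => ?_, sum_eq_zero fun k hk => ?_] <;>
  · simp only [mem_Icc] at hk
    rw [truncateAt, if_neg (by omega), if_neg (by omega)]

lemma truncateAt_apply {f : ℤ → Ω → ℝ} {c : ℝ} (hc : f z ω = c) {k : ℤ}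
    (hk : k ≤ z) :
    truncateAt f z c k ω = f k ω := by
  unfold truncateAt
  split_ifs with hlt heq
  · rfl
  · rw [heq, hc]
  · omega

lemma etaConf_eq_etaConf_truncateAt (hz : SecondClassAt a s z ω) (hi : i < z) :
    etaConf a s i ω = etaConf (truncateAt a z 0) (truncateAt s z 1) i ω :=
  etaConf_eq_of_queueEmptyAt hz.2.2 (queueEmptyAt_truncateAt 0 1)
    (fun _ _ hk => (truncateAt_apply hz.2.1 hk).symm)
    (fun _ _ hk => (truncateAt_apply hz.1 hk).symm) hi

variable {m : MeasurableSpace Ω}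

lemma measurable_truncateAt {f : ℤ → Ω → ℝ} (c : ℝ) (hf : ∀ k < z, Measurable[m] (f k))
    (k : ℤ) :
    Measurable[m] (truncateAt f z c k) := by
  unfold truncateAt
  split_ifs with hk
  · exact hf k hk
  all_goals exact measurable_const

lemma measurableSet_queueEmptyAt (ha : ∀ k, i ≤ k → Measurable[m] (a k))
    (hs : ∀ k, i ≤ k → Measurable[m] (s k)) :
    MeasurableSet[m] {ω | QueueEmptyAt a s i ω} := by
  refine measurableSet_setOfPred.2 <| Measurable.forall fun j => Measurable.forall fun _ => ?_
  exact (Finset.measurable_sum _ fun k hk => ha k (mem_Icc.1 hk).1).le'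
    (Finset.measurable_sum _ fun k hk => hs k (mem_Icc.1 hk).1)

lemma measurableSet_secondClassAt (ha : ∀ k, i ≤ k → Measurable[m] (a k))
    (hs : ∀ k, i ≤ k → Measurable[m] (s k)) :
    MeasurableSet[m] {ω | SecondClassAt a s i ω} := by
  simp only [secondClassAt_iff, Set.ofPred_and]
  exact ((hs i le_rfl) (measurableSet_singleton 1)).inter (((ha i le_rfl)
    (measurableSet_singleton 0)).inter (measurableSet_queueEmptyAt (fun k hk => ha k (by omega))
      (fun k hk => hs k (by omega))))

lemma measurableSet_firstClassAt (ha : ∀ k, i ≤ k → Measurable[m] (a k))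
    (hs : ∀ k, i ≤ k → Measurable[m] (s k)) :
    MeasurableSet[m] {ω | FirstClassAt a s i ω} := by
  simp only [firstClassAt_iff, Set.ofPred_and, Set.ofPred_or]
  exact ((hs i le_rfl) (measurableSet_singleton 1)).inter (((ha i le_rfl)
    (measurableSet_singleton 1)).union (measurableSet_queueEmptyAt (fun k hk => ha k (by omega))
      (fun k hk => hs k (by omega))).compl)

lemma measurable_etaConf (ha : ∀ k, i ≤ k → Measurable[m] (a k))
    (hs : ∀ k, i ≤ k → Measurable[m] (s k)) : Measurable[m] (etaConf a s i) :=
  Measurable.ite (measurableSet_secondClassAt ha hs) measurable_const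
    (Measurable.ite (measurableSet_firstClassAt ha hs) measurable_const measurable_const)

end Queue

section Sites

variable {Ω : Type*} (a s : ℤ → Ω → ℝ)

abbrev siteSigma (T : Set ℤ) : MeasurableSpace Ω :=
  ⨆ x ∈ Sum.elim id id ⁻¹' T, MeasurableSpace.comap (Sum.elim a s x) inferInstance

variable {a s} {T : Set ℤ} {k : ℤ}

lemma measurable_arrival_siteSigma (hk : k ∈ T) : Measurable[siteSigma a s T] (a k) :=
  measurable_iff_comap_le.2 <| le_biSup (fun x => MeasurableSpace.comap (Sum.elim a s x) _)
    (show Sum.inl k ∈ Sum.elim id id ⁻¹' T from hk)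

lemma measurable_service_siteSigma (hk : k ∈ T) : Measurable[siteSigma a s T] (s k) :=
  measurable_iff_comap_le.2 <| le_biSup (fun x => MeasurableSpace.comap (Sum.elim a s x) _)
    (show Sum.inr k ∈ Sum.elim id id ⁻¹' T from hk)

lemma indep_siteSigma [MeasurableSpace Ω] {μ : Measure Ω} (ha : ∀ k, Measurable (a k))
    (hs : ∀ k, Measurable (s k))
    (hindep : iIndepFun (m := fun _ : ℤ ⊕ ℤ => (inferInstance : MeasurableSpace ℝ))
      (Sum.elim a s) μ)
    {T' : Set ℤ} (hTT' : Disjoint T T') :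
    Indep (siteSigma a s T) (siteSigma a s T') μ :=
  indep_iSup_of_disjoint (fun x => Sum.rec (fun k => (ha k).comap_le) (fun k => (hs k).comap_le) x)
    hindep.iIndep (hTT'.preimage _)

lemma measurable_etaConf_siteSigma_Ici {z i : ℤ} (hi : z ≤ i) :
    Measurable[siteSigma a s (Set.Ici z)] (etaConf a s i) :=
  measurable_etaConf (fun _ hk => measurable_arrival_siteSigma (hi.trans hk))
    (fun _ hk => measurable_service_siteSigma (hi.trans hk))

lemma measurable_etaConf_truncateAt_siteSigma_Iio (z i : ℤ) :
    Measurable[siteSigma a s (Set.Iio z)]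
      (etaConf (truncateAt a z 0) (truncateAt s z 1) i) := by
  have ha : ∀ k, Measurable[siteSigma a s (Set.Iio z)] (truncateAt a z 0 k) :=
    measurable_truncateAt 0 fun _ hk => measurable_arrival_siteSigma hk
  have hs : ∀ k, Measurable[siteSigma a s (Set.Iio z)] (truncateAt s z 1 k) :=
    measurable_truncateAt 1 fun _ hk => measurable_service_siteSigma hk
  exact measurable_etaConf (fun k _ => ha k) (fun k _ => hs k)

end Sites

lemma exists_measurableSet_inter_eq_of_eqOn {Ω ι β : Type*} [MeasurableSpace β]
    {m : MeasurableSpace Ω} {f g : ι → Ω → β} {S E : Set Ω}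
    (hfg : ∀ i, Set.EqOn (f i) (g i) S) (hg : ∀ i, Measurable[m] (g i))
    (hE : MeasurableSet[⨆ i, MeasurableSpace.comap (f i) inferInstance] E) :
    ∃ E', MeasurableSet[m] E' ∧ E ∩ S = E' ∩ S := by
  have hle : (⨆ i, MeasurableSpace.comap (f i) inferInstance).comap ((↑) : S → Ω) ≤
      m.comap ((↑) : S → Ω) := by
    rw [MeasurableSpace.comap_iSup]
    refine iSup_le fun i => ?_
    have : f i ∘ ((↑) : S → Ω) = g i ∘ (↑) := funext fun x => hfg i x.2
    rw [MeasurableSpace.comap_comp, this, ← MeasurableSpace.comap_comp]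
    exact MeasurableSpace.comap_mono (hg i).comap_le
  obtain ⟨E', hE', hpre⟩ := hle _ ⟨E, hE, rfl⟩
  refine ⟨E', hE', ?_⟩
  rw [Set.inter_comm, Set.inter_comm E', ← Subtype.preimage_coe_eq_preimage_coe_iff, hpre]

lemma measure_inter_inter_mul_eq_of_indep {Ω : Type*} {L N m : MeasurableSpace Ω}
    {μ : Measure[m] Ω} (hLN : Indep L N μ) {E E' F S : Set Ω} (hE' : MeasurableSet[L] E')
    (hES : E ∩ S = E' ∩ S) (hF : MeasurableSet[N] F) (hS : MeasurableSet[N] S) :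
    μ (E ∩ F ∩ S) * μ S = μ (E ∩ S) * μ (F ∩ S) := by
  have hEFS : E ∩ F ∩ S = E' ∩ (F ∩ S) := by
    rw [Set.inter_right_comm, hES, Set.inter_right_comm, Set.inter_assoc]
  rw [hEFS, hES, (Indep_iff _ _ _).1 hLN _ _ hE' (hF.inter hS),
    (Indep_iff _ _ _).1 hLN _ _ hE' hS, mul_right_comm]

theorem independence_given_second_class_particle_general
    {Ω : Type*} [MeasureSpace Ω]
    (a s : ℤ → Ω → ℝ)
    (hma : ∀ k, Measurable (a k)) (hms : ∀ k, Measurable (s k))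
    (hindep : iIndepFun (m := fun _ : ℤ ⊕ ℤ => (inferInstance : MeasurableSpace ℝ))
      (Sum.elim a s) volume)
    (z : ℤ) (E F : Set Ω)
    (hE : MeasurableSet[⨆ i : {i : ℤ // i < z},
      MeasurableSpace.comap (etaConf a s i.1) inferInstance] E)
    (hF : MeasurableSet[⨆ i : {i : ℤ // z < i},
      MeasurableSpace.comap (etaConf a s i.1) inferInstance] F) :
    volume (E ∩ F ∩ {ω | SecondClassAt a s z ω}) * volume {ω | SecondClassAt a s z ω}
      = volume (E ∩ {ω | SecondClassAt a s z ω})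
        * volume (F ∩ {ω | SecondClassAt a s z ω}) := by
  set S := {ω | SecondClassAt a s z ω}
  have hblocks : Indep (siteSigma a s (Set.Iio z)) (siteSigma a s (Set.Ici z)) volume :=
    indep_siteSigma hma hms hindep (Set.Iio_disjoint_Ici le_rfl)
  obtain ⟨E', hE', hES⟩ :
      ∃ E', MeasurableSet[siteSigma a s (Set.Iio z)] E' ∧ E ∩ S = E' ∩ S :=
    exists_measurableSet_inter_eq_of_eqOn
      (fun (i : {i : ℤ // i < z}) _ hω => etaConf_eq_etaConf_truncateAt hω i.2)
      (fun i => measurable_etaConf_truncateAt_siteSigma_Iio z i.1) hE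
  have hF' : MeasurableSet[siteSigma a s (Set.Ici z)] F :=
    iSup_le (fun i => (measurable_etaConf_siteSigma_Ici (le_of_lt i.2)).comap_le) _ hF
  have hS : MeasurableSet[siteSigma a s (Set.Ici z)] S :=
    measurableSet_secondClassAt (fun _ hk => measurable_arrival_siteSigma hk)
      (fun _ hk => measurable_service_siteSigma hk)
  exact measure_inter_inter_mul_eq_of_indep hblocks hE' hES hF' hS

/-- Conditioned on a second class particle at site z, the configuration to the
left of z and the configuration to the right of z are independent. -/
theorem independence_given_second_class_particle
    {Ω : Type*} [MeasureSpace Ω] [IsProbabilityMeasure (volume : Measure Ω)]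
    (ρ1 ρ2 : ℝ) (h1 : ρ1 ∈ Set.Ioo (0:ℝ) 1) (h2 : ρ2 ∈ Set.Ioo (0:ℝ) (1 - ρ1))
    (a s : ℤ → Ω → ℝ)
    (hma : ∀ k, Measurable (a k)) (hms : ∀ k, Measurable (s k))
    (hva : ∀ k ω, a k ω = 0 ∨ a k ω = 1) (hvs : ∀ k ω, s k ω = 0 ∨ s k ω = 1)
    (hindep : iIndepFun (m := fun _ : ℤ ⊕ ℤ => (inferInstance : MeasurableSpace ℝ))
      (Sum.elim a s) volume)
    (hpa : ∀ k, volume {ω | a k ω = 1} = ENNReal.ofReal ρ1)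
    (hps : ∀ k, volume {ω | s k ω = 1} = ENNReal.ofReal (ρ1 + ρ2))
    (z : ℤ) (E F : Set Ω)
    (hE : MeasurableSet[⨆ i : {i : ℤ // i < z},
      MeasurableSpace.comap (etaConf a s i.1) inferInstance] E)
    (hF : MeasurableSet[⨆ i : {i : ℤ // z < i},
      MeasurableSpace.comap (etaConf a s i.1) inferInstance] F) :
    volume (E ∩ F ∩ {ω | SecondClassAt a s z ω}) * volume {ω | SecondClassAt a s z ω}
      = volume (E ∩ {ω | SecondClassAt a s z ω})
        * volume (F ∩ {ω | SecondClassAt a s z ω}) :=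
  independence_given_second_class_particle_general a s hma hms hindep z E F hE hF
end
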